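/- arXiv:1306.5316 — 6 statements merged into one kernel-verified Lean document; each statement's English description precedes it below -/
import Mathlib

section
/- Every 2-connected graph on at least 3 vertices contains a heavy cycle, i.e., a cycle passing through every vertex of degree at least n/2, where n is the number of vertices. -/
open SimpleGraph

/-- A vertex is heavy if its degree is at least half the number of vertices. -/
def Heavy {V : Type*} [Fintype V] (G : SimpleGraph V) (v : V) : Prop :=
  Fintype.card V ≤ 2 * (G.neighborSet v).ncard

/-- `{x,y} ∈ Ẽ(G)`: distinct vertices that are adjacent or have degree sum at least `n`. -/
def TEdge {V : Type*} [Fintype V] (G : SimpleGraph V) (x y : V) : Prop :=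
  x ≠ y ∧ (G.Adj x y ∨
    Fintype.card V ≤ (G.neighborSet x).ncard + (G.neighborSet y).ncard)

/-- `a` is the center and `b,c,d` the end vertices of an induced claw `K_{1,3}`. -/
def IsClaw {V : Type*} (G : SimpleGraph V) (a b c d : V) : Prop :=
  G.Adj a b ∧ G.Adj a c ∧ G.Adj a d ∧
    ¬ G.Adj b c ∧ ¬ G.Adj b d ∧ ¬ G.Adj c d ∧ b ≠ c ∧ b ≠ d ∧ c ≠ d

/-- Every claw has at least one heavy end vertex. -/
def OneHeavy {V : Type*} [Fintype V] (G : SimpleGraph V) : Prop :=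
  ∀ a b c d, IsClaw G a b c d → Heavy G b ∨ Heavy G c ∨ Heavy G d

/-- Every claw has at least two heavy end vertices. -/
def TwoHeavy {V : Type*} [Fintype V] (G : SimpleGraph V) : Prop :=
  ∀ a b c d, IsClaw G a b c d →
    (Heavy G b ∧ Heavy G c) ∨ (Heavy G b ∧ Heavy G d) ∨ (Heavy G c ∧ Heavy G d)

/-- Every claw has two end vertices with degree sum at least `n`. -/
def ClawHeavy {V : Type*} [Fintype V] (G : SimpleGraph V) : Prop :=
  ∀ a b c d, IsClaw G a b c d →
    Fintype.card V ≤ (G.neighborSet b).ncard + (G.neighborSet c).ncard ∨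
    Fintype.card V ≤ (G.neighborSet b).ncard + (G.neighborSet d).ncard ∨
    Fintype.card V ≤ (G.neighborSet c).ncard + (G.neighborSet d).ncard

/-- `G` contains no induced claw. -/
def ClawFree {V : Type*} (G : SimpleGraph V) : Prop :=
  ∀ a b c d, ¬ IsClaw G a b c d

/-- Almost distance-hereditary: in every connected induced subgraph the distance
between two vertices exceeds their distance in `G` by at most one. -/
def AlmostDH {V : Type*} (G : SimpleGraph V) : Prop :=
  ∀ s : Set V, (G.induce s).Connected →
    ∀ x y : s, (G.induce s).dist x y ≤ G.dist (x : V) (y : V) + 1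

/-- Distance-hereditary: every connected induced subgraph preserves distances. -/
def DistHered {V : Type*} (G : SimpleGraph V) : Prop :=
  ∀ s : Set V, (G.induce s).Connected →
    ∀ x y : s, (G.induce s).dist x y = G.dist (x : V) (y : V)

/-- A cycle in `G`, encoded as an injective cyclic sequence of `m ≥ 3` pairwise
adjacent-in-order vertices. -/
def IsCycleMap {V : Type*} (G : SimpleGraph V) (m : ℕ) (f : ZMod m → V) : Prop :=
  3 ≤ m ∧ Function.Injective f ∧ ∀ i, G.Adj (f i) (f (i + 1))

/-- A longest cycle of `G`. -/
def IsLongestCycleMap {V : Type*} (G : SimpleGraph V) (m : ℕ) (f : ZMod m → V) : Prop :=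
  IsCycleMap G m f ∧ ∀ (m' : ℕ) (f' : ZMod m' → V), IsCycleMap G m' f' → m' ≤ m

/-- `R` is a connected component of the subgraph of `G` induced on `W`. -/
def IsCompOf {V : Type*} (G : SimpleGraph V) (W R : Set V) : Prop :=
  R.Nonempty ∧ R ⊆ W ∧ (G.induce R).Connected ∧
    ∀ x ∈ R, ∀ y ∈ W, G.Adj x y → y ∈ R

/-!
Take a cycle `C` through as many heavy vertices as possible and suppose a heavy vertex `v` lies off
`C`; let `R` be the component of `v` in `G - C`. Any cycle through `v` that keeps all of `C` except
the inner vertices of one arc would then contain more heavy vertices than `C`, so such an arc must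
contain a heavy vertex. If `v` has no neighbour on `C`, reroute between two consecutive heavy
vertices of `C` through two distinct common neighbours with `v` (two heavy non-adjacent vertices
have at least two). If every heavy vertex of `C` is a neighbour of `v`, reroute through `R` from a
neighbour `a` of `v` to the next vertex of `C` with a neighbour in `R`; by 2-connectivity it is not
`a` itself. Otherwise some heavy `y` on `C`, not adjacent to `v`, follows a neighbour `a` of `v`
with only light non-neighbours in between. Rerouting shows that `y` has no neighbour in `R` and none
among the successors of the other neighbours of `v` on `C`, whence `d(v) + d(y) < n`.
-/

namespace ZMod

variable {m : ℕ}

lemma add_natCast_add_natCast_sub (a : ZMod m) {D : ℕ} (hD : D ≤ m) :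
    a + D + ((m - D : ℕ) : ZMod m) = a := by
  rw [Nat.cast_sub hD, natCast_self]
  ring

lemma exists_pos_lt_add_eq [NeZero m] {a i : ZMod m} (h : i ≠ a) :
    ∃ D, 0 < D ∧ D < m ∧ a + D = i := by
  refine ⟨(i - a).val, Nat.pos_of_ne_zero fun h0 => h ?_, val_lt _, ?_⟩
  · rwa [val_eq_zero, sub_eq_zero] at h0
  · rw [natCast_zmod_val]
    ring

end ZMod

section CycleMap

variable {V : Type*} {G : SimpleGraph V}

lemma exists_isCycleMap_of_isChain {L : List V} (h3 : 3 ≤ L.length) (hnd : L.Nodup)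
    (hc : (L ++ L.take 1).IsChain G.Adj) :
    ∃ m f, IsCycleMap G m f ∧ Set.range f = {x | x ∈ L} := by
  have : NeZero L.length := ⟨by omega⟩
  refine ⟨L.length, fun i => L[i.val]'(ZMod.val_lt i), ⟨h3, ?_, fun i => ?_⟩, ?_⟩
  · intro i j hij
    exact ZMod.val_injective _ ((hnd.getElem_inj_iff).1 hij)
  · have hi := ZMod.val_lt i
    have hadj := List.isChain_iff_getElem.1 hc i.val (by simp; omega)
    have hsucc : (i + 1).val = (i.val + 1) % L.length := by
      rw [ZMod.val_add, ZMod.val_one_eq_one_mod, Nat.add_mod_mod]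
    simp only [List.getElem_append_left hi] at hadj
    convert hadj using 1
    rcases Nat.lt_or_ge (i.val + 1) L.length with h | h
    · simp only [hsucc, Nat.mod_eq_of_lt h, List.getElem_append_left h]
    · have h' : i.val + 1 = L.length := by omega
      simp [hsucc, h']
  · ext x
    constructor
    · rintro ⟨i, rfl⟩
      exact List.getElem_mem _
    · intro hx
      obtain ⟨k, hk, rfl⟩ := List.getElem_of_mem hx
      exact ⟨k, by simp [ZMod.val_natCast_of_lt hk]⟩

end CycleMap

namespace IsCycleMap

variable {V : Type*} {G : SimpleGraph V} {m : ℕ} {f : ZMod m → V}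

def arc (f : ZMod m → V) (b : ZMod m) (len : ℕ) : List V :=
  (List.range len).map fun t : ℕ => f (b + t)

lemma mem_arc {b : ZMod m} {len : ℕ} {x : V} :
    x ∈ arc f b len ↔ ∃ t < len, f (b + t) = x := by
  simp [arc]

lemma length_arc (b : ZMod m) (len : ℕ) : (arc f b len).length = len := by
  simp [arc]

lemma arc_add (b : ZMod m) (k l : ℕ) : arc f b (k + l) = arc f b k ++ arc f (b + k) l := by
  simp [arc, List.range_add, add_assoc]

lemma arc_succ (b : ZMod m) (len : ℕ) : arc f b (len + 1) = arc f b len ++ [f (b + len)] := by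
  simp [arc, List.range_succ]

lemma arc_succ' (b : ZMod m) (len : ℕ) : arc f b (len + 1) = f b :: arc f (b + 1) len := by
  rw [add_comm, arc_add]
  simp [arc]

lemma isChain_arc (hC : IsCycleMap G m f) (b : ZMod m) (len : ℕ) :
    (arc f b len).IsChain G.Adj := by
  rw [arc, List.isChain_map]
  exact (List.isChain_range _ len).2 fun t _ => by simpa [add_assoc] using hC.2.2 (b + t)

lemma nodup_arc (hC : IsCycleMap G m f) (b : ZMod m) {len : ℕ} (hlen : len ≤ m) :
    (arc f b len).Nodup := by
  refine List.Nodup.map_on (fun s hs t ht hst => ?_) List.nodup_range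
  rw [List.mem_range] at hs ht
  have h := add_left_cancel (hC.2.1 hst)
  rw [ZMod.natCast_eq_natCast_iff'] at h
  rwa [Nat.mod_eq_of_lt (by omega), Nat.mod_eq_of_lt (by omega)] at h

lemma mem_arc_of_forall_ne [NeZero m] {a i : ZMod m} {D : ℕ} (hD : D ≤ m)
    (hi : ∀ s, 0 < s → s < D → i ≠ a + s) : f i ∈ arc f (a + D) (m - D + 1) := by
  have hia : i = a + (i - a).val := by rw [ZMod.natCast_zmod_val]; ring
  have hlt := ZMod.val_lt (i - a)
  rw [mem_arc]
  rcases Nat.lt_or_ge (i - a).val D with hs | hs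
  · have hs0 : (i - a).val = 0 := by
      by_contra h
      exact hi _ (Nat.pos_of_ne_zero h) hs hia
    refine ⟨m - D, by omega, ?_⟩
    rw [ZMod.add_natCast_add_natCast_sub a hD, hia, hs0, Nat.cast_zero, add_zero]
  · refine ⟨(i - a).val - D, by omega, ?_⟩
    rw [Nat.cast_sub hs, ZMod.natCast_zmod_val]
    ring_nf

lemma take_one_arc_append (b : ZMod m) (len : ℕ) (l : List V) :
    (arc f b (len + 1) ++ l).take 1 = [f b] := by
  simp [arc_succ']

lemma head?_arc (b : ZMod m) (len : ℕ) : (arc f b (len + 1)).head? = some (f b) := by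
  simp [arc_succ']

lemma getLast?_arc (b : ZMod m) (len : ℕ) :
    (arc f b (len + 1)).getLast? = some (f (b + len)) := by
  simp [arc_succ]

/-- The new cycle runs `f (a + D), …, f (a + m) = f a`, then along `q`. -/
lemma exists_isCycleMap_arc_append_path (hC : IsCycleMap G m f) {a : ZMod m} {D : ℕ}
    (hD : 1 ≤ D) (hDm : D ≤ m) {w₁ w₂ : V} (q : G.Walk w₁ w₂) (hq : q.IsPath)
    (hqf : ∀ y ∈ q.support, y ∉ Set.range f) (h₁ : G.Adj (f a) w₁)
    (h₂ : G.Adj w₂ (f (a + D))) (hlen : D < m + q.length) :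
    ∃ m' f', IsCycleMap G m' f' ∧ (∀ y ∈ q.support, y ∈ Set.range f') ∧
      ∀ i, (∀ s, 0 < s → s < D → i ≠ a + s) → f i ∈ Set.range f' := by
  have : NeZero m := ⟨by have := hC.1; omega⟩
  set L := arc f (a + D) (m - D + 1) ++ q.support
  have hL3 : 3 ≤ L.length := by
    rw [List.length_append, length_arc, q.length_support]
    omega
  have hLnd : L.Nodup := by
    refine List.nodup_append.2 ⟨hC.nodup_arc _ (by omega), hq.support_nodup, ?_⟩
    rintro _ hx y hy rfl
    obtain ⟨t, -, rfl⟩ := mem_arc.1 hx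
    exact hqf _ hy ⟨_, rfl⟩
  have hLc : (L ++ L.take 1).IsChain G.Adj := by
    rw [take_one_arc_append, List.append_assoc, ← q.support_concat h₂]
    refine List.isChain_append.2 ⟨hC.isChain_arc _ _, (q.concat h₂).isChain_adj_support, ?_⟩
    rw [Walk.support_concat, ← q.cons_tail_support]
    simp only [getLast?_arc, ZMod.add_natCast_add_natCast_sub a hDm, List.cons_append,
      List.head?_cons, Option.mem_def, Option.some.injEq, forall_eq']
    exact h₁
  obtain ⟨m', f', hC', hrange⟩ := exists_isCycleMap_of_isChain hL3 hLnd hLc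
  refine ⟨m', f', hC', fun y hy => ?_, fun i hi => ?_⟩ <;> rw [hrange]
  · exact List.mem_append_right _ hy
  · exact List.mem_append_left _ (mem_arc_of_forall_ne hDm hi)

lemma arc_eq_append {a : ZMod m} {D c : ℕ} (hDc : D ≤ c) (hcm : c < m) :
    arc f (a + D) (m - D + 1) =
      arc f (a + D) (c - D + 1) ++ arc f (a + (c + 1 : ℕ)) (m - (c + 1) + 1) := by
  have e₁ : c - D + 1 + (m - (c + 1) + 1) = m - D + 1 := by omega
  have e₂ : a + D + ((c - D + 1 : ℕ) : ZMod m) = a + (c + 1 : ℕ) := by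
    push_cast [Nat.cast_sub hDc]
    ring
  rw [← e₁, arc_add, e₂]

/-- The new cycle is
`v, f a, f (a - 1), …, f (a + c + 1), f (a + D), f (a + D + 1), …, f (a + c)`. -/
lemma exists_isCycleMap_two_chords (hC : IsCycleMap G m f) {v : V} (hv : v ∉ Set.range f)
    {a : ZMod m} {D c : ℕ} (hD : 1 ≤ D) (hDc : D ≤ c) (hcm : c < m) (h₁ : G.Adj v (f a))
    (h₂ : G.Adj (f (a + (c + 1 : ℕ))) (f (a + D))) (h₃ : G.Adj (f (a + c)) v) :
    ∃ m' f', IsCycleMap G m' f' ∧ v ∈ Set.range f' ∧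
      ∀ i, (∀ s, 0 < s → s < D → i ≠ a + s) → f i ∈ Set.range f' := by
  have : NeZero m := ⟨by have := hC.1; omega⟩
  set up := arc f (a + D) (c - D + 1) with hup
  set down := arc f (a + (c + 1 : ℕ)) (m - (c + 1) + 1) with hdown
  have hperm : (down.reverse ++ up).Perm (arc f (a + D) (m - D + 1)) :=
    arc_eq_append hDc hcm ▸ List.perm_append_comm.trans ((List.reverse_perm down).append_left up)
  set L := v :: (down.reverse ++ up)
  have hL3 : 3 ≤ L.length := by
    simp only [L, up, down, List.length_cons, List.length_append, List.length_reverse, length_arc]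
    omega
  have hLnd : L.Nodup := by
    refine List.nodup_cons.2 ⟨fun hvL => ?_, hperm.nodup_iff.2 (hC.nodup_arc _ (by omega))⟩
    obtain ⟨t, -, ht⟩ := mem_arc.1 (hperm.subset hvL)
    exact hv ⟨_, ht⟩
  have hLc : (L ++ L.take 1).IsChain G.Adj := by
    have hdown' : down.reverse.IsChain G.Adj :=
      List.isChain_reverse.2 ((hC.isChain_arc _ _).imp fun _ _ h => h.symm)
    have hup' : (up ++ [v]).IsChain G.Adj := by
      refine List.isChain_append.2 ⟨hC.isChain_arc _ _, List.isChain_singleton v, ?_⟩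
      have e : a + D + ((c - D : ℕ) : ZMod m) = a + c := by
        rw [Nat.cast_sub hDc]
        ring
      simpa [hup, getLast?_arc, e] using h₃
    simp only [L, List.cons_append, List.take_succ_cons, List.take_zero, List.append_assoc]
    refine List.isChain_cons.2 ⟨?_, List.isChain_append.2 ⟨hdown', hup', ?_⟩⟩
    · rw [List.head?_append, List.head?_reverse, hdown, getLast?_arc,
        ZMod.add_natCast_add_natCast_sub a (Nat.succ_le_of_lt hcm)]
      simpa using h₁
    · simpa [hdown, hup, head?_arc] using h₂
  obtain ⟨m', f', hC', hrange⟩ := exists_isCycleMap_of_isChain hL3 hLnd hLc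
  refine ⟨m', f', hC', ?_, fun i hi => ?_⟩ <;> rw [hrange]
  · exact List.mem_cons_self
  · exact List.mem_cons_of_mem _ (hperm.symm.subset (mem_arc_of_forall_ne (by omega) hi))

end IsCycleMap

namespace SimpleGraph

variable {V : Type*} {G : SimpleGraph V}

def componentAvoiding (G : SimpleGraph V) (S : Set V) (v : V) : Set V :=
  {x | ∃ p : G.Walk v x, ∀ y ∈ p.support, y ∉ S}

variable {S : Set V} {v x y : V}

lemma self_mem_componentAvoiding (hv : v ∉ S) : v ∈ G.componentAvoiding S v :=
  ⟨Walk.nil, by simpa using hv⟩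

lemma notMem_of_mem_componentAvoiding (hx : x ∈ G.componentAvoiding S v) : x ∉ S := by
  obtain ⟨p, hp⟩ := hx
  exact hp x p.end_mem_support

lemma mem_componentAvoiding_of_adj (hx : x ∈ G.componentAvoiding S v) (hxy : G.Adj x y)
    (hy : y ∉ S) : y ∈ G.componentAvoiding S v := by
  obtain ⟨p, hp⟩ := hx
  refine ⟨p.concat hxy, fun z hz => ?_⟩
  rw [Walk.support_concat, List.mem_append, List.mem_singleton] at hz
  rcases hz with hz | rfl
  exacts [hp z hz, hy]

lemma exists_isPath_of_mem_componentAvoiding (hx : x ∈ G.componentAvoiding S v) :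
    ∃ q : G.Walk v x, q.IsPath ∧ ∀ y ∈ q.support, y ∉ S := by
  classical
  obtain ⟨p, hp⟩ := hx
  exact ⟨p.toPath, p.toPath.2, fun y hy => hp y (p.support_toPath_subset_support hy)⟩

lemma exists_adj_of_walk_to_mem (hx : x ∈ G.componentAvoiding S v) {c u₀ : V} (p : G.Walk x c)
    (hc : c ∈ S) (hu₀ : u₀ ∉ p.support) :
    ∃ w ∈ G.componentAvoiding S v, ∃ u ∈ S, u ≠ u₀ ∧ G.Adj w u := by
  induction p with
  | nil => exact absurd hc (notMem_of_mem_componentAvoiding hx)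
  | @cons x y c h q ih =>
    rw [Walk.support_cons, List.mem_cons, not_or] at hu₀
    by_cases hy : y ∈ S
    · exact ⟨x, hx, y, hy, fun h => hu₀.2 (h ▸ q.start_mem_support), h⟩
    · exact ih (mem_componentAvoiding_of_adj hx h hy) hc hu₀.2

lemma exists_isPath_notMem_support (h2conn : ∀ v : V, (G.induce {v}ᶜ).Connected)
    {a b x : V} (ha : a ≠ x) (hb : b ≠ x) : ∃ p : G.Walk a b, p.IsPath ∧ x ∉ p.support := by
  classical
  obtain ⟨q⟩ := (h2conn x).preconnected ⟨a, ha⟩ ⟨b, hb⟩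
  have hq : x ∉ (q.map (Embedding.induce ({x}ᶜ : Set V)).toHom).support := by
    rw [Walk.support_map]
    simp
  let p : G.Walk a b := q.map (Embedding.induce _).toHom
  have hp : x ∉ p.support := hq
  exact ⟨p.toPath, p.toPath.2, fun h => hp (p.support_toPath_subset_support h)⟩

variable [Fintype V]

lemma exists_adj_ne (h3 : 3 ≤ Fintype.card V) (h2conn : ∀ v : V, (G.induce {v}ᶜ).Connected)
    {x u : V} (hux : u ≠ x) : ∃ w, G.Adj x w ∧ w ≠ u := by
  classical
  obtain ⟨b, -, hb⟩ := Finset.exists_mem_notMem_of_card_lt_card (s := {u, x})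
    (t := Finset.univ) (by rw [Finset.card_univ]; exact (Finset.card_le_two).trans_lt h3)
  rw [Finset.mem_insert, Finset.mem_singleton, not_or] at hb
  obtain ⟨p, -, hp⟩ := exists_isPath_notMem_support h2conn hux.symm hb.1
  cases p with
  | nil => exact absurd rfl hb.2
  | cons h q => exact ⟨_, h, fun h' => hp (List.mem_cons_of_mem _ (h' ▸ q.start_mem_support))⟩

lemma exists_isCycleMap_mem (h3 : 3 ≤ Fintype.card V)
    (h2conn : ∀ v : V, (G.induce {v}ᶜ).Connected) (x : V) :
    ∃ m f, IsCycleMap G m f ∧ x ∈ Set.range f := by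
  obtain ⟨u, hu⟩ := Fintype.exists_ne_of_one_lt_card (by omega) x
  obtain ⟨w₁, h₁, -⟩ := exists_adj_ne h3 h2conn hu
  obtain ⟨w₂, h₂, hw⟩ := exists_adj_ne h3 h2conn h₁.ne'
  obtain ⟨p, hp, hxp⟩ := exists_isPath_notMem_support h2conn h₁.ne' h₂.ne'
  have hlen : p.length ≠ 0 := fun h => hw (Walk.eq_of_length_eq_zero h).symm
  have hL3 : 3 ≤ (x :: p.support).length := by
    rw [List.length_cons, p.length_support]
    omega
  have hLc : (x :: p.support ++ (x :: p.support).take 1).IsChain G.Adj := by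
    rw [List.take_succ_cons, List.take_zero, List.cons_append, ← p.support_concat h₂.symm]
    refine List.isChain_cons.2 ⟨?_, (p.concat _).isChain_adj_support⟩
    rw [← (p.concat _).cons_tail_support]
    simpa using h₁
  obtain ⟨m, f, hC, hrange⟩ :=
    exists_isCycleMap_of_isChain hL3 (List.nodup_cons.2 ⟨hxp, hp.support_nodup⟩) hLc
  exact ⟨m, f, hC, by simp [hrange]⟩

end SimpleGraph

section Heavy

variable {V : Type*} [Fintype V] {G : SimpleGraph V}

lemma exists_isCycleMap_forall_ncard_inter_le (H : Set V) (h : ∃ m f, IsCycleMap G m f) :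
    ∃ m f, IsCycleMap G m f ∧
      ∀ m' f', IsCycleMap G m' f' → (Set.range f' ∩ H).ncard ≤ (Set.range f ∩ H).ncard := by
  set K := {k | ∃ m f, IsCycleMap G m f ∧ (Set.range f ∩ H).ncard = k}
  have hK : BddAbove K := ⟨Nat.card V, by rintro _ ⟨m, f, -, rfl⟩; exact Set.ncard_le_card _⟩
  have hne : K.Nonempty := by
    obtain ⟨m, f, hC⟩ := h
    exact ⟨_, m, f, hC, rfl⟩
  obtain ⟨m, f, hC, hf⟩ := Nat.sSup_mem hne hK
  exact ⟨m, f, hC, fun m' f' hC' => hf ▸ le_csSup hK ⟨m', f', hC', rfl⟩⟩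

lemma ncard_neighborSet_add_ncard_le {y : V} {Y : Set V} (hY : ∀ z ∈ Y, ¬ G.Adj y z) :
    (G.neighborSet y).ncard + Y.ncard ≤ Fintype.card V := by
  rw [← Set.ncard_union_eq (s := G.neighborSet y) (t := Y)
    (Set.disjoint_left.2 fun z hz hzY => hY z hzY hz)]
  exact (Set.ncard_le_card _).trans_eq Nat.card_eq_fintype_card

lemma not_heavy_of_forall_not_adj {v y : V} {X Y : Set V} (hv : Heavy G v)
    (hX : insert v (G.neighborSet v) ⊆ X) (hY : ∀ z ∈ Y, ¬ G.Adj y z)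
    (hXY : X.ncard ≤ Y.ncard) : ¬ Heavy G y := by
  intro hy
  have hvX : (G.neighborSet v).ncard + 1 ≤ X.ncard := by
    rw [← Set.ncard_insert_of_notMem G.notMem_neighborSet_self]
    exact Set.ncard_le_ncard hX
  have := ncard_neighborSet_add_ncard_le hY
  unfold Heavy at hv hy
  omega

lemma one_lt_ncard_commonNeighbors {v y : V} (hv : Heavy G v) (hy : Heavy G y) (hne : v ≠ y)
    (hadj : ¬ G.Adj v y) : 1 < (G.commonNeighbors v y).ncard := by
  have hunion : G.neighborSet v ∪ G.neighborSet y ⊆ {v, y}ᶜ := by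
    rintro z (hz | hz) (rfl | rfl)
    exacts [G.irrefl hz, hadj hz, hadj hz.symm, G.irrefl hz]
  have h₁ := Set.ncard_le_ncard hunion
  rw [Set.ncard_compl, Set.ncard_pair hne, Nat.card_eq_fintype_card] at h₁
  have h₂ := Set.ncard_inter_add_ncard_union (G.neighborSet v) (G.neighborSet y)
  rw [← commonNeighbors] at h₂
  have h₀ : 1 < Fintype.card V := Fintype.one_lt_card_iff.2 ⟨v, y, hne⟩
  unfold Heavy at hv hy
  omega

end Heavy

def IsHeavyMaximal {V : Type*} [Fintype V] (G : SimpleGraph V) (m : ℕ) (f : ZMod m → V) : Prop :=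
  IsCycleMap G m f ∧ ∀ m' (f' : ZMod m' → V), IsCycleMap G m' f' →
    (Set.range f' ∩ {x | Heavy G x}).ncard ≤ (Set.range f ∩ {x | Heavy G x}).ncard

namespace IsHeavyMaximal

variable {V : Type*} [Fintype V] {G : SimpleGraph V} {m : ℕ} {f : ZMod m → V} {v : V}

lemma exists_heavy_notMem (hC : IsHeavyMaximal G m f) (hv : Heavy G v) (hvf : v ∉ Set.range f)
    {m' : ℕ} {f' : ZMod m' → V} (hC' : IsCycleMap G m' f') (hvf' : v ∈ Set.range f') :
    ∃ i, Heavy G (f i) ∧ f i ∉ Set.range f' := by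
  by_contra! h
  have hsub : insert v (Set.range f ∩ {x | Heavy G x}) ⊆ Set.range f' ∩ {x | Heavy G x} := by
    rintro x (rfl | ⟨⟨i, rfl⟩, hx⟩)
    exacts [⟨hvf', hv⟩, ⟨h i hx, hx⟩]
  have := Set.ncard_le_ncard hsub
  rw [Set.ncard_insert_of_notMem fun hx => hvf hx.1] at this
  exact absurd (hC.2 m' f' hC') (by omega)

lemma exists_heavy_in_gap (hC : IsHeavyMaximal G m f) (hv : Heavy G v) (hvf : v ∉ Set.range f)
    {m' : ℕ} {f' : ZMod m' → V} (hC' : IsCycleMap G m' f') (hvf' : v ∈ Set.range f')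
    {a : ZMod m} {D : ℕ} (hcover : ∀ i, (∀ s, 0 < s → s < D → i ≠ a + s) → f i ∈ Set.range f') :
    ∃ s, 0 < s ∧ s < D ∧ Heavy G (f (a + s)) := by
  obtain ⟨i, hi, hif'⟩ := hC.exists_heavy_notMem hv hvf hC' hvf'
  by_contra! hgap
  refine hif' (hcover i fun s hs hsD hia => ?_)
  exact hgap s hs hsD (hia ▸ hi)

lemma false_of_forall_not_adj (hC : IsHeavyMaximal G m f) (hv : Heavy G v)
    (hvf : v ∉ Set.range f) (hA : ∀ i, ¬ G.Adj v (f i)) {i₀ : ZMod m} (hi₀ : Heavy G (f i₀)) :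
    False := by
  classical
  have hm : 0 < m := by have := hC.1.1; omega
  have hnext : ∃ D : ℕ, 0 < D ∧ Heavy G (f (i₀ + D)) :=
    ⟨m, hm, by rwa [ZMod.natCast_self, add_zero]⟩
  set D := Nat.find hnext
  obtain ⟨hD, hDH⟩ := Nat.find_spec hnext
  have hDm : D ≤ m := Nat.find_min' hnext ⟨hm, by rwa [ZMod.natCast_self, add_zero]⟩
  have hvf' : ∀ i, v ≠ f i := fun i h => hvf ⟨i, h.symm⟩
  obtain ⟨z₁, hz₁v, hz₁i⟩ := Set.nonempty_of_ncard_ne_zero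
    (one_lt_ncard_commonNeighbors hv hi₀ (hvf' i₀) (hA i₀)).ne_bot
  obtain ⟨z₂, ⟨hz₂v, hz₂D⟩, hz₂⟩ := Set.exists_ne_of_one_lt_ncard
    (one_lt_ncard_commonNeighbors hv hDH (hvf' _) (hA _)) z₁
  simp only [mem_neighborSet] at hz₁v hz₁i hz₂v hz₂D
  have hzf : ∀ z, G.Adj v z → z ∉ Set.range f := by
    rintro z hz ⟨i, rfl⟩
    exact hA i hz
  let q : G.Walk z₁ z₂ := .cons hz₁v.symm (.cons hz₂v .nil)
  have hq : q.IsPath := by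
    rw [Walk.isPath_def]
    simp [q, hz₂.symm, hz₁v.ne.symm, hz₂v.ne]
  have hqf : ∀ y ∈ q.support, y ∉ Set.range f := by
    simp only [q, Walk.support_cons, Walk.support_nil, List.mem_cons, List.not_mem_nil, or_false]
    rintro y (rfl | rfl | rfl)
    exacts [hzf _ hz₁v, hvf, hzf _ hz₂v]
  obtain ⟨m', f', hC', hqf', hcover⟩ := hC.1.exists_isCycleMap_arc_append_path hD hDm q hq
    hqf hz₁i hz₂D.symm (by simp only [q, Walk.length_cons, Walk.length_nil]; omega)
  obtain ⟨s, hs, hsD, hsH⟩ :=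
    hC.exists_heavy_in_gap hv hvf hC' (hqf' v (by simp [q])) hcover
  exact Nat.find_min hnext hsD ⟨hs, hsH⟩

lemma false_of_forall_heavy_adj (hC : IsHeavyMaximal G m f) (hv : Heavy G v)
    (hvf : v ∉ Set.range f) (h2conn : ∀ u : V, (G.induce {u}ᶜ).Connected) {a₀ : ZMod m}
    (ha₀ : G.Adj v (f a₀)) (hH : ∀ i, Heavy G (f i) → G.Adj v (f i)) : False := by
  classical
  have : Fact (1 < m) := ⟨by have := hC.1.1; omega⟩
  set R := G.componentAvoiding (Set.range f) v
  have hvR : v ∈ R := self_mem_componentAvoiding hvf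
  have hattach : ∃ D : ℕ, 0 < D ∧ D < m ∧
      ∃ a, G.Adj v (f a) ∧ ∃ w ∈ R, G.Adj w (f (a + D)) := by
    have hne : f (a₀ + 1) ≠ f a₀ := fun h => by simpa using hC.1.2.1 h
    obtain ⟨p, -, hp⟩ := exists_isPath_notMem_support h2conn (fun h => hvf ⟨a₀, h.symm⟩) hne
    obtain ⟨w, hw, _, ⟨t, rfl⟩, ht, hwt⟩ := exists_adj_of_walk_to_mem hvR p ⟨_, rfl⟩ hp
    obtain ⟨D, hD, hDm, rfl⟩ := ZMod.exists_pos_lt_add_eq (a := a₀) fun h => ht (congrArg f h)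
    exact ⟨D, hD, hDm, a₀, ha₀, w, hw, hwt⟩
  obtain ⟨hD, hDm, a, ha, w, hw, hwD⟩ := Nat.find_spec hattach
  set D := Nat.find hattach
  obtain ⟨q, hq, hqf⟩ := exists_isPath_of_mem_componentAvoiding hw
  obtain ⟨m', f', hC', hqf', hcover⟩ := hC.1.exists_isCycleMap_arc_append_path hD hDm.le q hq
    hqf ha.symm hwD (by omega)
  obtain ⟨s, hs, hsD, hsH⟩ :=
    hC.exists_heavy_in_gap hv hvf hC' (hqf' v q.start_mem_support) hcover
  refine Nat.find_min hattach (m := D - s) (by omega)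
    ⟨by omega, by omega, a + s, hH _ hsH, w, hw, ?_⟩
  rwa [add_assoc, ← Nat.cast_add, Nat.add_sub_cancel' hsD.le]

lemma not_heavy_of_forall_not_adj_succ (hC : IsCycleMap G m f) (hv : Heavy G v)
    (hvf : v ∉ Set.range f) {a : ZMod m} (ha : G.Adj v (f a)) {y : V} (hyf : y ∈ Set.range f)
    (hR : ∀ w ∈ G.componentAvoiding (Set.range f) v, ¬ G.Adj w y)
    (hsucc : ∀ j, G.Adj v (f j) → j ≠ a → f (j + 1) ≠ y ∧ ¬ G.Adj (f (j + 1)) y) :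
    ¬ Heavy G y := by
  have : NeZero m := ⟨by have := hC.1; omega⟩
  set A := {i | G.Adj v (f i)}
  set R := G.componentAvoiding (Set.range f) v
  have hvR : v ∈ R := self_mem_componentAvoiding hvf
  have hRf : ∀ x ∈ R, x ∉ Set.range f := fun x hx => notMem_of_mem_componentAvoiding hx
  have hsucc_inj : Function.Injective fun j : ZMod m => f (j + 1) :=
    fun i j h => add_right_cancel (hC.2.1 h)
  refine not_heavy_of_forall_not_adj hv (X := f '' A ∪ R)
    (Y := R ∪ (fun j => f (j + 1)) '' (A \ {a}) ∪ {y}) ?_ ?_ ?_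
  · rintro x (rfl | hx)
    · exact Or.inr hvR
    · by_cases hxf : x ∈ Set.range f
      · obtain ⟨i, rfl⟩ := hxf
        exact Or.inl ⟨i, hx, rfl⟩
      · exact Or.inr (mem_componentAvoiding_of_adj hvR hx hxf)
  · rintro z ((hz | ⟨j, ⟨hj, hja⟩, rfl⟩) | rfl) hyz
    exacts [hR z hz hyz.symm, (hsucc j hj hja).2 hyz.symm, G.irrefl hyz]
  · have hX := Set.ncard_union_le (f '' A) R
    rw [Set.ncard_image_of_injective _ hC.2.1] at hX
    have hA := Set.ncard_sdiff_singleton_add_one (show a ∈ A from ha)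
    have hRA : Disjoint R ((fun j => f (j + 1)) '' (A \ {a})) :=
      Set.disjoint_left.2 fun x hx ⟨j, _, hj⟩ => hRf x hx ⟨j + 1, hj⟩
    have hy : y ∉ R ∪ (fun j => f (j + 1)) '' (A \ {a}) := by
      rintro (hyR | ⟨j, ⟨hj, hja⟩, hjy⟩)
      exacts [hRf y hyR hyf, (hsucc j hj hja).1 hjy]
    rw [Set.union_singleton, Set.ncard_insert_of_notMem hy, Set.ncard_union_eq hRA,
      Set.ncard_image_of_injective _ hsucc_inj]
    omega

lemma not_adj_of_mem_componentAvoiding (hC : IsHeavyMaximal G m f) (hv : Heavy G v)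
    (hvf : v ∉ Set.range f) {a : ZMod m} {D : ℕ} (ha : G.Adj v (f a)) (hD : 0 < D) (hDm : D < m)
    (hgap : ∀ s, 0 < s → s < D → ¬ Heavy G (f (a + s))) :
    ∀ w ∈ G.componentAvoiding (Set.range f) v, ¬ G.Adj w (f (a + D)) := by
  intro w hw hwD
  obtain ⟨q, hq, hqf⟩ := exists_isPath_of_mem_componentAvoiding hw
  obtain ⟨m', f', hC', hqf', hcover⟩ := hC.1.exists_isCycleMap_arc_append_path hD hDm.le q hq
    hqf ha.symm hwD (by omega)
  obtain ⟨s, hs, hsD, hsH⟩ :=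
    hC.exists_heavy_in_gap hv hvf hC' (hqf' v q.start_mem_support) hcover
  exact hgap s hs hsD hsH

lemma not_adj_succ_of_adj (hC : IsHeavyMaximal G m f) (hv : Heavy G v) (hvf : v ∉ Set.range f)
    {a : ZMod m} {D : ℕ} (ha : G.Adj v (f a)) (hD : 0 < D)
    (hgap : ∀ s, 0 < s → s < D → ¬ G.Adj v (f (a + s)) ∧ ¬ Heavy G (f (a + s)))
    (hvD : ¬ G.Adj v (f (a + D))) {j : ZMod m} (hj : G.Adj v (f j)) (hja : j ≠ a) :
    ¬ G.Adj (f (j + 1)) (f (a + D)) := by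
  have : NeZero m := ⟨by have := hC.1.1; omega⟩
  intro hjD
  obtain ⟨c, hc, hcm, rfl⟩ := ZMod.exists_pos_lt_add_eq hja
  have hDc : D < c := by
    by_contra! h
    rcases h.lt_or_eq with h | rfl
    exacts [(hgap c hc h).1 hj, hvD hj]
  obtain ⟨m', f', hC', hvf', hcover⟩ := hC.1.exists_isCycleMap_two_chords hvf hD hDc.le hcm ha
    (by rwa [Nat.cast_succ, ← add_assoc]) hj.symm
  obtain ⟨s, hs, hsD, hsH⟩ := hC.exists_heavy_in_gap hv hvf hC' hvf' hcover
  exact (hgap s hs hsD).2 hsH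

lemma not_heavy_of_gap (hC : IsHeavyMaximal G m f) (hv : Heavy G v) (hvf : v ∉ Set.range f)
    {a : ZMod m} {D : ℕ} (ha : G.Adj v (f a)) (hD : 0 < D) (hDm : D < m)
    (hgap : ∀ s, 0 < s → s < D → ¬ G.Adj v (f (a + s)) ∧ ¬ Heavy G (f (a + s)))
    (hvD : ¬ G.Adj v (f (a + D))) : ¬ Heavy G (f (a + D)) := by
  refine not_heavy_of_forall_not_adj_succ hC.1 hv hvf ha ⟨_, rfl⟩
    (hC.not_adj_of_mem_componentAvoiding hv hvf ha hD hDm fun s hs hsD => (hgap s hs hsD).2)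
    fun j hj hja => ⟨fun hjD => ?_, hC.not_adj_succ_of_adj hv hvf ha hD hgap hvD hj hja⟩
  have hj' : j = a + ((D - 1 : ℕ) : ZMod m) := by
    rw [Nat.cast_sub hD, Nat.cast_one]
    linear_combination hC.1.2.1 hjD
  rcases Nat.eq_zero_or_pos (D - 1) with h0 | h0
  · exact hja (by rw [hj', h0, Nat.cast_zero, add_zero])
  · exact (hgap _ h0 (by omega)).1 (hj' ▸ hj)

lemma false_of_heavy_not_adj (hC : IsHeavyMaximal G m f) (hv : Heavy G v)
    (hvf : v ∉ Set.range f) {a₀ i₀ : ZMod m} (ha₀ : G.Adj v (f a₀)) (hi₀ : Heavy G (f i₀))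
    (hvi₀ : ¬ G.Adj v (f i₀)) : False := by
  classical
  have : NeZero m := ⟨by have := hC.1.1; omega⟩
  have hpair : ∃ D : ℕ, 0 < D ∧ D < m ∧
      ∃ a, G.Adj v (f a) ∧ Heavy G (f (a + D)) ∧ ¬ G.Adj v (f (a + D)) := by
    obtain ⟨D, hD, hDm, rfl⟩ :=
      ZMod.exists_pos_lt_add_eq (a := a₀) (i := i₀) fun h => hvi₀ (h ▸ ha₀)
    exact ⟨D, hD, hDm, a₀, ha₀, hi₀, hvi₀⟩
  obtain ⟨hD, hDm, a, ha, hDH, hvD⟩ := Nat.find_spec hpair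
  set D := Nat.find hpair
  have hgap_adj : ∀ s, 0 < s → s < D → ¬ G.Adj v (f (a + s)) := by
    intro s hs hsD has
    have e : a + s + ((D - s : ℕ) : ZMod m) = a + D := by
      rw [Nat.cast_sub hsD.le]
      ring
    exact Nat.find_min hpair (m := D - s) (by omega)
      ⟨by omega, by omega, a + s, has, e ▸ hDH, e ▸ hvD⟩
  refine hC.not_heavy_of_gap hv hvf ha hD hDm (fun s hs hsD => ⟨hgap_adj s hs hsD, fun hsH => ?_⟩)
    hvD hDH
  exact Nat.find_min hpair hsD ⟨hs, by omega, a, ha, hsH, hgap_adj s hs hsD⟩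

end IsHeavyMaximal

/-- Every 2-connected graph (at least 3 vertices, connected after deleting any
single vertex) contains a heavy cycle: a cycle through every heavy vertex. -/
theorem heavy_cycle_exists {V : Type*} [Fintype V] (G : SimpleGraph V)
    (h3 : 3 ≤ Fintype.card V)
    (h2conn : ∀ v : V, (G.induce {v}ᶜ).Connected) :
    ∃ (m : ℕ) (f : ZMod m → V), IsCycleMap G m f ∧
      ∀ v : V, Heavy G v → v ∈ Set.range f := by
  obtain ⟨x⟩ : Nonempty V := Fintype.card_pos_iff.1 (by omega)
  obtain ⟨m, f, hC⟩ : ∃ m f, IsHeavyMaximal G m f := by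
    obtain ⟨m, f, hC, -⟩ := exists_isCycleMap_mem h3 h2conn x
    exact exists_isCycleMap_forall_ncard_inter_le _ ⟨m, f, hC⟩
  refine ⟨m, f, hC.1, fun v hv => by_contra fun hvf => ?_⟩
  by_cases hA : ∃ a, G.Adj v (f a)
  · obtain ⟨a, ha⟩ := hA
    by_cases hH : ∀ i, Heavy G (f i) → G.Adj v (f i)
    · exact hC.false_of_forall_heavy_adj hv hvf h2conn ha hH
    · push Not at hH
      obtain ⟨i, hi, hvi⟩ := hH
      exact hC.false_of_heavy_not_adj hv hvf ha hi hvi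
  · obtain ⟨m', f', hC', hvf'⟩ := exists_isCycleMap_mem h3 h2conn v
    obtain ⟨i, hi, -⟩ := hC.exists_heavy_notMem hv hvf hC' hvf'
    exact hC.false_of_forall_not_adj hv hvf (fun a ha => hA ⟨a, ha⟩) hi
end

section
/- Let G be a non-Hamiltonian graph on n vertices, C a longest cycle of G with a fixed orientation, R a connected component of G − V(C), u a vertex of R, and v a vertex of C with a neighbor in R. Then u is not adjacent to the successor v⁺ nor to the predecessor v⁻ of v on C; moreover d(u)+d(v⁺) < n and d(u)+d(v⁻) < n. -/
open SimpleGraph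

section Aux

open Function

private theorem path_getVert_inj {V : Type*} {G : SimpleGraph V} {a b : V} (p : G.Walk a b)
    (hp : p.IsPath) : ∀ t ≤ p.length, ∀ t' ≤ p.length, p.getVert t = p.getVert t' → t = t' := by
  induction p with
  | nil => intro t ht t' ht' _; simp at ht ht'; omega
  | cons hadj q ih =>
    rw [SimpleGraph.Walk.cons_isPath_iff] at hp
    intro t ht t' ht' heq
    match t, t' with
    | 0, 0 => rfl
    | 0, (n+1) =>
      exfalso
      apply hp.2
      rw [SimpleGraph.Walk.mem_support_iff_exists_getVert]
      refine ⟨n, ?_, by simp [SimpleGraph.Walk.length_cons] at ht'; omega⟩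
      simpa [SimpleGraph.Walk.getVert_zero, SimpleGraph.Walk.getVert_cons_succ] using heq.symm
    | (n+1), 0 =>
      exfalso
      apply hp.2
      rw [SimpleGraph.Walk.mem_support_iff_exists_getVert]
      refine ⟨n, ?_, by simp [SimpleGraph.Walk.length_cons] at ht; omega⟩
      simpa [SimpleGraph.Walk.getVert_zero, SimpleGraph.Walk.getVert_cons_succ] using heq
    | (n+1), (n'+1) =>
      simp only [SimpleGraph.Walk.getVert_cons_succ] at heq
      simp only [SimpleGraph.Walk.length_cons] at ht ht'
      have := ih hp.1 n (by omega) n' (by omega) heq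
      omega

/-- Key lemma: a longest cycle cannot be rerouted and extended by an external path. -/
private theorem no_longer {V : Type*} (G : SimpleGraph V)
    (m : ℕ) (f : ZMod m → V) (hC : IsLongestCycleMap G m f)
    (k : ℕ) (h p : ℕ → V)
    (hh_inj : ∀ t < m, ∀ t' < m, h t = h t' → t = t')
    (hh_mem : ∀ t < m, h t ∈ Set.range f)
    (hp_inj : ∀ t ≤ k, ∀ t' ≤ k, p t = p t' → t = t')
    (hp_mem : ∀ t ≤ k, p t ∉ Set.range f)
    (hh_adj : ∀ t, t + 1 < m → G.Adj (h t) (h (t+1)))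
    (hp_adj : ∀ t, t < k → G.Adj (p t) (p (t+1)))
    (hj1 : G.Adj (h (m-1)) (p 0))
    (hj2 : G.Adj (p k) (h 0)) : False := by
  obtain ⟨⟨hm3, hfinj, hfadj⟩, hmax⟩ := hC
  set m' := m + k + 1 with hm'
  haveI : NeZero m' := ⟨by omega⟩
  haveI : Fact (1 < m') := ⟨by omega⟩
  set g : ZMod m' → V := fun j => if j.val < m then h j.val else p (j.val - m) with hg
  have hcyc : IsCycleMap G m' g := by
    refine ⟨by omega, ?_, ?_⟩
    · intro j j' hjj
      have hjv : j.val < m' := ZMod.val_lt j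
      have hj'v : j'.val < m' := ZMod.val_lt j'
      have hveq : j.val = j'.val := by
        simp only [hg] at hjj
        by_cases h1 : j.val < m <;> by_cases h2 : j'.val < m
        · rw [if_pos h1, if_pos h2] at hjj; exact hh_inj _ h1 _ h2 hjj
        · rw [if_pos h1, if_neg h2] at hjj
          exact absurd (hjj ▸ hh_mem _ h1) (hp_mem _ (by omega))
        · rw [if_neg h1, if_pos h2] at hjj
          exact absurd (hjj.symm ▸ hh_mem _ h2) (hp_mem _ (by omega))
        · rw [if_neg h1, if_neg h2] at hjj
          have := hp_inj _ (by omega) _ (by omega) hjj; omega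
      calc j = ((j.val : ℕ) : ZMod m') := (ZMod.natCast_rightInverse j).symm
        _ = ((j'.val : ℕ) : ZMod m') := by rw [hveq]
        _ = j' := ZMod.natCast_rightInverse j'
    · intro j
      have hjv : j.val < m' := ZMod.val_lt j
      have hsucc : (j + 1).val = (j.val + 1) % m' := by
        rw [ZMod.val_add, ZMod.val_one]
      rcases lt_trichotomy (j.val + 1) m with hlt | heqm | hgt
      · have h1 : (j + 1).val = j.val + 1 := by rw [hsucc, Nat.mod_eq_of_lt (by omega)]
        simp only [hg, h1, if_pos hlt, if_pos (show j.val < m by omega)]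
        exact hh_adj _ hlt
      · have h1 : (j + 1).val = m := by rw [hsucc, heqm, Nat.mod_eq_of_lt (by omega)]
        simp only [hg, h1, if_neg (lt_irrefl m), if_pos (show j.val < m by omega),
          Nat.sub_self]
        have h2 : j.val = m - 1 := by omega
        rw [h2]; exact hj1
      · rcases eq_or_lt_of_le (show j.val + 1 ≤ m' by omega) with hlast | hmid
        · have h1 : (j + 1).val = 0 := by rw [hsucc, hlast, Nat.mod_self]
          simp only [hg, h1, if_pos (show (0:ℕ) < m by omega),
            if_neg (show ¬ j.val < m by omega)]
          have h2 : j.val - m = k := by omega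
          rw [h2]; exact hj2
        · have h1 : (j + 1).val = j.val + 1 := by rw [hsucc, Nat.mod_eq_of_lt (by omega)]
          simp only [hg, h1, if_neg (show ¬ j.val < m by omega),
            if_neg (show ¬ j.val + 1 < m by omega)]
          have h2 : j.val + 1 - m = (j.val - m) + 1 := by omega
          rw [h2]
          exact hp_adj _ (by omega)
  have := hmax m' g hcyc
  omega

end Aux


private theorem exists_path_fn {V : Type*} {G : SimpleGraph V} {R : Set V}
    (hconn : (G.induce R).Connected) {w z : V} (hw : w ∈ R) (hz : z ∈ R) :
    ∃ (k : ℕ) (p : ℕ → V), p 0 = w ∧ p k = z ∧ (∀ t ≤ k, p t ∈ R) ∧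
      (∀ t ≤ k, ∀ t' ≤ k, p t = p t' → t = t') ∧
      (∀ t, t < k → G.Adj (p t) (p (t+1))) := by
  classical
  obtain ⟨q⟩ := hconn.preconnected ⟨w, hw⟩ ⟨z, hz⟩
  let P := q.toPath
  refine ⟨P.1.length, fun t => (P.1.getVert t : V), ?_, ?_, ?_, ?_, ?_⟩
  · simp [SimpleGraph.Walk.getVert_zero]
  · simp [SimpleGraph.Walk.getVert_length]
  · intro t _; exact (P.1.getVert t).2
  · intro t ht t' ht' heq
    exact path_getVert_inj P.1 P.2 t ht t' ht' (Subtype.coe_injective heq)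
  · intro t ht
    simpa using P.1.adj_getVert_succ ht

/-- Claim A: no vertex of `R` is adjacent to the successor of a vertex of the
longest cycle having a neighbour in `R`. -/
private theorem claimA {V : Type*} (G : SimpleGraph V)
    (m : ℕ) (f : ZMod m → V) (hC : IsLongestCycleMap G m f)
    (R : Set V) (hRsub : R ⊆ (Set.range f)ᶜ) (hconn : (G.induce R).Connected)
    (i : ZMod m) (w : V) (hw : w ∈ R) (hiw : G.Adj (f i) w)
    (z : V) (hz : z ∈ R) : ¬ G.Adj (f (i + 1)) z := by
  intro hadj
  obtain ⟨⟨hm3, hfinj, hfadj⟩, hmax⟩ := hC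
  haveI : NeZero m := ⟨by omega⟩
  obtain ⟨k, p, hp0, hpk, hpmem, hpinj, hpadj⟩ := exists_path_fn hconn hw hz
  set h : ℕ → V := fun t => f (i + 1 + ((t : ℕ) : ZMod m)) with hh
  refine no_longer G m f ⟨⟨hm3, hfinj, hfadj⟩, hmax⟩ k h p
    ?_ (fun t _ => ⟨_, rfl⟩) hpinj (fun t ht hmem => (hRsub (hpmem t ht)) hmem) ?_ hpadj ?_ ?_
  · intro t ht t' ht' heq
    simp only [hh] at heq
    have := hfinj heq
    have h2 : ((t : ℕ) : ZMod m) = ((t' : ℕ) : ZMod m) := by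
      have := add_left_cancel this
      exact this
    have h3 : (((t : ℕ) : ZMod m)).val = (((t' : ℕ) : ZMod m)).val := by rw [h2]
    rwa [ZMod.val_cast_of_lt ht, ZMod.val_cast_of_lt ht'] at h3
  · intro t ht
    simp only [hh]
    have e : ((t + 1 : ℕ) : ZMod m) = ((t : ℕ) : ZMod m) + 1 := by push_cast; ring
    rw [e, ← add_assoc]
    exact hfadj _
  · simp only [hh]
    have h1 : ((m - 1 : ℕ) : ZMod m) = -1 := by
      have e : ((m - 1 : ℕ) : ZMod m) = ((m : ℕ) : ZMod m) - 1 := by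
        rw [Nat.cast_sub (by omega)]; simp
      rw [e, ZMod.natCast_self]; ring
    rw [h1, hp0]
    have e2 : i + 1 + (-1 : ZMod m) = i := by ring
    rw [e2]
    exact hiw
  · simp only [hh]
    rw [hpk]
    simpa using hadj.symm

/-- Claim B: a crossing chord configuration would extend the longest cycle. -/
private theorem claimB {V : Type*} (G : SimpleGraph V)
    (m : ℕ) (f : ZMod m → V) (hC : IsLongestCycleMap G m f)
    (R : Set V) (hRsub : R ⊆ (Set.range f)ᶜ) (hconn : (G.induce R).Connected)
    (i : ZMod m) (w : V) (hw : w ∈ R) (hiw : G.Adj (f i) w)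
    (u : V) (hu : u ∈ R) (s : ℕ) (hs1 : 1 ≤ s) (hs2 : s < m)
    (hux : G.Adj u (f (i + (s : ℕ))))
    (hBx : G.Adj (f (i + 1)) (f (i + 1 + (s : ℕ)))) : False := by
  obtain ⟨⟨hm3, hfinj, hfadj⟩, hmax⟩ := hC
  haveI : NeZero m := ⟨by omega⟩
  obtain ⟨k, p, hp0, hpk, hpmem, hpinj, hpadj⟩ := exists_path_fn hconn hw hu
  set h : ℕ → V := fun t => if t < s then f (i + 1 + ((s - 1 - t : ℕ) : ZMod m))
    else f (i + 1 + ((t : ℕ) : ZMod m)) with hh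
  have hcast : ∀ a b : ℕ, a < m → b < m →
      f (i + 1 + ((a : ℕ) : ZMod m)) = f (i + 1 + ((b : ℕ) : ZMod m)) → a = b := by
    intro a b ha hb heq
    have h2 := add_left_cancel (hfinj heq)
    have h3 : (((a : ℕ) : ZMod m)).val = (((b : ℕ) : ZMod m)).val := by rw [h2]
    rwa [ZMod.val_cast_of_lt ha, ZMod.val_cast_of_lt hb] at h3
  refine no_longer G m f ⟨⟨hm3, hfinj, hfadj⟩, hmax⟩ k h p
    ?_ ?_ hpinj (fun t ht hmem => (hRsub (hpmem t ht)) hmem) ?_ hpadj ?_ ?_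
  · -- injectivity of h
    intro t ht t' ht' heq
    simp only [hh] at heq
    by_cases h1 : t < s <;> by_cases h2 : t' < s
    · rw [if_pos h1, if_pos h2] at heq
      have := hcast _ _ (by omega) (by omega) heq
      omega
    · rw [if_pos h1, if_neg h2] at heq
      have := hcast _ _ (by omega) (by omega) heq
      omega
    · rw [if_neg h1, if_pos h2] at heq
      have := hcast _ _ (by omega) (by omega) heq
      omega
    · rw [if_neg h1, if_neg h2] at heq
      have := hcast _ _ (by omega) (by omega) heq
      omega
  · intro t _
    simp only [hh]
    split <;> exact ⟨_, rfl⟩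
  · -- adjacency of h
    intro t htm
    simp only [hh]
    rcases lt_trichotomy (t + 1) s with hlt | heqs | hgt
    · rw [if_pos (by omega), if_pos hlt]
      have e1 : (s - 1 - t : ℕ) = (s - 1 - (t+1)) + 1 := by omega
      rw [e1]
      have e2 : (((s - 1 - (t+1)) + 1 : ℕ) : ZMod m) = ((s - 1 - (t+1) : ℕ) : ZMod m) + 1 := by
        push_cast; ring
      rw [e2, ← add_assoc]
      exact (hfadj _).symm
    · rw [if_pos (by omega), if_neg (by omega)]
      have e1 : (s - 1 - t : ℕ) = 0 := by omega
      have e2 : (t + 1 : ℕ) = s := by omega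
      rw [e1, e2]
      simpa using hBx
    · rw [if_neg (by omega), if_neg (by omega)]
      have e2 : ((t + 1 : ℕ) : ZMod m) = ((t : ℕ) : ZMod m) + 1 := by push_cast; ring
      rw [e2, ← add_assoc]
      exact hfadj _
  · -- junction 1 : h (m-1) = f i adjacent to p 0 = w
    simp only [hh]
    rw [if_neg (by omega), hp0]
    have h1 : ((m - 1 : ℕ) : ZMod m) = -1 := by
      have e : ((m - 1 : ℕ) : ZMod m) = ((m : ℕ) : ZMod m) - 1 := by
        rw [Nat.cast_sub (by omega)]; simp
      rw [e, ZMod.natCast_self]; ring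
    rw [h1]
    have : i + 1 + (-1 : ZMod m) = i := by ring
    rw [this]
    exact hiw
  · -- junction 2 : p k = u adjacent to h 0 = f (i + s)
    simp only [hh]
    rw [if_pos (by omega), hpk]
    have e1 : ((s - 1 : ℕ) : ZMod m) = ((s : ℕ) : ZMod m) - 1 := by
      rw [Nat.cast_sub (by omega)]; simp
    have e2 : (s - 1 - 0 : ℕ) = s - 1 := by omega
    rw [e2, e1]
    have : i + 1 + (((s : ℕ) : ZMod m) - 1) = i + ((s : ℕ) : ZMod m) := by ring
    rw [this]
    exact hux


private theorem aux_plus {V : Type*} [Fintype V] (G : SimpleGraph V)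
    (m : ℕ) (f : ZMod m → V) (hC : IsLongestCycleMap G m f)
    (R : Set V) (hR : IsCompOf G (Set.range f)ᶜ R)
    (u : V) (hu : u ∈ R)
    (i : ZMod m) (hnbr : ∃ w ∈ R, G.Adj (f i) w) :
    ¬ G.Adj u (f (i + 1)) ∧
    (G.neighborSet u).ncard + (G.neighborSet (f (i + 1))).ncard < Fintype.card V := by
  obtain ⟨w, hw, hiw⟩ := hnbr
  obtain ⟨hRne, hRsub, hRconn, hRcl⟩ := hR
  have hm3 : 3 ≤ m := hC.1.1
  haveI : NeZero m := ⟨by omega⟩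
  have hfinj : Function.Injective f := hC.1.2.1
  have hclA : ∀ z ∈ R, ¬ G.Adj (f (i+1)) z := fun z hz =>
    claimA G m f hC R hRsub hRconn i w hw hiw z hz
  have hadj_u : ¬ G.Adj u (f (i + 1)) := fun hadj => hclA u hu hadj.symm
  refine ⟨hadj_u, ?_⟩
  have huf : u ∉ Set.range f := hRsub hu
  set A : Set V := G.neighborSet u with hA_def
  set B : Set V := G.neighborSet (f (i+1)) with hB_def
  set A₁ : Set V := A ∩ Set.range f with hA1
  set A₂ : Set V := A \ Set.range f with hA2
  set q : V → V := fun x => f (Function.invFun f x + 1) with hq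
  have hqf : ∀ j : ZMod m, q (f j) = f (j + 1) := by
    intro j; simp only [hq, Function.leftInverse_invFun hfinj j]
  have hA2R : A₂ ⊆ R := by
    intro y hy
    exact hRcl u hu y hy.2 hy.1
  have hqinj : Set.InjOn q A₁ := by
    intro x hx y hy hxy
    obtain ⟨jx, rfl⟩ := hx.2
    obtain ⟨jy, rfl⟩ := hy.2
    rw [hqf, hqf] at hxy
    rw [add_right_cancel (hfinj hxy)]
  have hBA1' : ∀ y ∈ q '' A₁, y ∉ B := by
    rintro y ⟨x, hx, rfl⟩ hyB
    obtain ⟨j, rfl⟩ := hx.2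
    rw [hqf] at hyB
    set s := (j - i).val with hs
    have hscast : ((s : ℕ) : ZMod m) = j - i := ZMod.natCast_rightInverse _
    by_cases hs0 : s = 0
    · have h0 : (0 : ZMod m) = j - i := by
        rw [← hscast, hs0]; simp
      have hji : j = i := by
        have : j - i = 0 := h0.symm
        rwa [sub_eq_zero] at this
      rw [hji] at hyB
      exact G.irrefl hyB
    · have hs1 : 1 ≤ s := by omega
      have hs2 : s < m := ZMod.val_lt _
      refine claimB G m f hC R hRsub hRconn i w hw hiw u hu s hs1 hs2 ?_ ?_
      · rw [hscast]
        have e : i + (j - i) = j := by ring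
        rw [e]
        exact hx.1
      · rw [hscast]
        have e : i + 1 + (j - i) = j + 1 := by ring
        rw [e]
        exact hyB
  have hdisj0 : Disjoint A₁ A₂ := by
    rw [Set.disjoint_left]
    rintro y ⟨_, hyf⟩ ⟨_, hynf⟩
    exact hynf hyf
  have hdisj1 : Disjoint (q '' A₁) A₂ := by
    rw [Set.disjoint_left]
    rintro y ⟨x, hx, rfl⟩ hy2
    exact hy2.2 ⟨_, rfl⟩
  have hdisj2 : Disjoint (q '' A₁ ∪ A₂) B := by
    rw [Set.disjoint_left]
    rintro y (hy | hy) hyB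
    · exact hBA1' y hy hyB
    · exact hclA y (hA2R hy) hyB
  have hdisj3 : Disjoint (q '' A₁ ∪ A₂ ∪ B) {u} := by
    rw [Set.disjoint_right]
    intro y hy
    rw [Set.mem_singleton_iff] at hy
    subst hy
    rintro ((⟨x, _, hxe⟩ | hy2) | hyB)
    · exact huf ⟨_, hxe⟩
    · exact G.irrefl hy2.1
    · exact hadj_u hyB.symm
  have hc1 : (q '' A₁).ncard = A₁.ncard := Set.ncard_image_of_injOn hqinj
  have hc2 : A₁.ncard + A₂.ncard = A.ncard := by
    rw [← Set.ncard_union_eq hdisj0, Set.inter_union_diff]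
  have htotal : (q '' A₁ ∪ A₂ ∪ B ∪ {u}).ncard ≤ Fintype.card V := by
    have h := Set.ncard_le_ncard (Set.subset_univ (q '' A₁ ∪ A₂ ∪ B ∪ {u})) (Set.toFinite _)
    simpa [Set.ncard_univ, Nat.card_eq_fintype_card] using h
  rw [Set.ncard_union_eq hdisj3, Set.ncard_union_eq hdisj2, Set.ncard_union_eq hdisj1,
    Set.ncard_singleton] at htotal
  omega

/-- Lemma 3(a): if `C` is a longest cycle of a non-Hamiltonian graph `G`, `R` a
component of `G − V(C)`, `u ∈ R`, and `v = f i` a vertex of `C` with a neighbor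
in `R`, then `u` is adjacent to neither `v⁺` nor `v⁻`, and moreover
`d(u)+d(v⁺) < n` and `d(u)+d(v⁻) < n`. -/
theorem lemma3a {V : Type*} [Fintype V] [DecidableEq V] (G : SimpleGraph V)
    (hnh : ¬ G.IsHamiltonian)
    (m : ℕ) (f : ZMod m → V) (hC : IsLongestCycleMap G m f)
    (R : Set V) (hR : IsCompOf G (Set.range f)ᶜ R)
    (u : V) (hu : u ∈ R)
    (i : ZMod m) (hnbr : ∃ w ∈ R, G.Adj (f i) w) :
    ¬ G.Adj u (f (i + 1)) ∧ ¬ G.Adj u (f (i - 1)) ∧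
    (G.neighborSet u).ncard + (G.neighborSet (f (i + 1))).ncard < Fintype.card V ∧
    (G.neighborSet u).ncard + (G.neighborSet (f (i - 1))).ncard < Fintype.card V := by
  obtain ⟨h1, h3⟩ := aux_plus G m f hC R hR u hu i hnbr
  have hm3 : 3 ≤ m := hC.1.1
  set f' : ZMod m → V := fun j => f (-j) with hf'
  have hC' : IsLongestCycleMap G m f' := by
    refine ⟨⟨hm3, ?_, ?_⟩, fun m'' f'' h => hC.2 m'' f'' h⟩
    · intro a b hab
      simp only [hf'] at hab
      exact neg_injective (hC.1.2.1 hab)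
    · intro j
      simp only [hf']
      have h := (hC.1.2.2 (-(j+1)))
      have e : -(j+1) + 1 = -j := by ring
      rw [e] at h
      exact h.symm
  have hrange : Set.range f' = Set.range f := by
    ext x
    constructor
    · rintro ⟨j, rfl⟩; exact ⟨-j, rfl⟩
    · rintro ⟨j, rfl⟩; exact ⟨-j, by simp [hf']⟩
  have hR' : IsCompOf G (Set.range f')ᶜ R := by rw [hrange]; exact hR
  have hnbr' : ∃ w ∈ R, G.Adj (f' (-i)) w := by
    simpa [hf'] using hnbr
  obtain ⟨h2, h4⟩ := aux_plus G m f' hC' R hR' u hu (-i) hnbr'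
  have e : f' (-i + 1) = f (i - 1) := by
    simp only [hf']
    congr 1
    ring
  rw [e] at h2 h4
  exact ⟨h1, h2, h3, h4⟩
end

section
/- Let G be a non-Hamiltonian graph on n vertices, C a longest cycle of G with a fixed orientation, R a component of G − V(C), and v_i, v_j two distinct vertices of C each having a neighbor in R such that there is a (v_i, v_j)-path with all internal vertices in R. Then v_i⁻v_j⁻ ∉ Ẽ(G) and v_i⁺v_j⁺ ∉ Ẽ(G), where Ẽ(G) = {xy : xy ∈ E(G) or d(x)+d(y) ≥ n}. -/
open SimpleGraph

/-!
Walk around `C` backwards from `v_j⁻` to `v_i`, cross to `v_j` through `R` along the path, and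
walk forwards around `C` to `v_i⁻`: this path covers all of `C` and at least one vertex of `R`,
so it is longer than a longest cycle. By Ore's argument the ends of such a path are neither
adjacent nor of degree sum at least `n`: a common neighbour off the path, or a vertex on it adjacent
to one end that directly follows a vertex adjacent to the other, would close the path into a cycle
at least as long as the path. Reversing the orientation of `C` gives the statement for successors.
-/

namespace List

variable {α : Type*}

theorem countP_add_countP_le_length_of_forall₂ {p q : α → Bool} {l₁ l₂ : List α}
    (h : Forall₂ (fun x y => ¬(p x ∧ q y)) l₁ l₂) : l₁.countP p + l₂.countP q ≤ l₁.length := by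
  induction h with
  | nil => simp
  | cons hxy _ ih =>
    simp only [countP_cons, length_cons]
    split_ifs <;> simp_all <;> omega

theorem countP_add_countP_le_length_sub_one {p q : α → Bool} {l : List α} {u w : α}
    (hu : l.head? = some u) (hw : l.getLast? = some w) (hpu : p u = false) (hqw : q w = false)
    (h : l.IsChain fun x y => ¬(q x ∧ p y)) : l.countP p + l.countP q ≤ l.length - 1 := by
  have htail : l.countP p = l.tail.countP p := by
    obtain ⟨t, rfl⟩ := head?_eq_some_iff.1 hu
    simp [hpu]
  have hdrop : l.countP q = l.dropLast.countP q := by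
    obtain ⟨s, rfl⟩ := getLast?_eq_some_iff.1 hw
    simp [hqw]
  have := countP_add_countP_le_length_of_forall₂ (isChain_iff_forall₂.1 h)
  simp only [length_dropLast] at this
  omega

theorem Nodup.card_eq_countP_add_card_filter_not_mem [DecidableEq α] {l : List α}
    (hl : l.Nodup) (s : Finset α) :
    s.card = l.countP (· ∈ s) + (s.filter (· ∉ l)).card := by
  rw [← Finset.card_filter_add_card_filter_not (s := s) (· ∈ l), countP_eq_length_filter,
    ← toFinset_card_of_nodup (hl.filter _)]
  congr 2
  ext x
  simp [and_comm]

end List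

theorem ZMod.exists_eq_add_of_ne {m : ℕ} [NeZero m] {a b : ZMod m} (hab : a ≠ b) :
    ∃ k j : ℕ, b = a + k + 1 ∧ a = b + j + 1 ∧ k + j + 2 = m := by
  have hk : ((b - a).val : ZMod m) = b - a := ZMod.natCast_zmod_val _
  have hpos : (b - a).val ≠ 0 := by
    rwa [Ne, ZMod.val_eq_zero, sub_eq_zero, eq_comm]
  have hlt := ZMod.val_lt (b - a)
  refine ⟨(b - a).val - 1, m - (b - a).val - 1, ?_, ?_, by omega⟩
  · rw [add_assoc, ← Nat.cast_add_one, Nat.sub_add_cancel (by omega), hk]; ring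
  · rw [add_assoc, ← Nat.cast_add_one, Nat.sub_add_cancel (by omega), Nat.cast_sub hlt.le,
      ZMod.natCast_self, hk]; ring

section

variable {V : Type*} {G : SimpleGraph V}

theorem SimpleGraph.Walk.exists_support_eq_cons_append {u v : V} (p : G.Walk u v)
    (hp : p.length ≠ 0) : ∃ I, p.support = u :: (I ++ [v]) := by
  cases p with
  | nil => simp at hp
  | cons _ q =>
    have := List.dropLast_append_getLast q.support_ne_nil
    rw [q.getLast_support] at this
    exact ⟨q.support.dropLast, by rw [support_cons, this]⟩

theorem tEdge_comm [Fintype V] {x y : V} : TEdge G x y ↔ TEdge G y x := by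
  unfold TEdge
  rw [ne_comm, G.adj_comm, add_comm]

theorem ncard_neighborSet_add_ncard_neighborSet_le [Fintype V] [DecidableRel G.Adj]
    {l : List V} (hl : l.Nodup) {u w : V} (h : ∀ x ∉ l, ¬ (G.Adj u x ∧ G.Adj w x)) :
    (G.neighborSet u).ncard + (G.neighborSet w).ncard ≤
      l.countP (G.Adj u ·) + l.countP (G.Adj w ·) + (Fintype.card V - l.length) := by
  classical
  have hdeg (v : V) : (G.neighborSet v).ncard =
      l.countP (G.Adj v ·) + ((G.neighborFinset v).filter (· ∉ l)).card := by
    rw [Set.ncard_eq_toFinset_card', ← neighborFinset_def,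
      hl.card_eq_countP_add_card_filter_not_mem]
    simp
  have houtside : ((G.neighborFinset u).filter (· ∉ l)).card +
      ((G.neighborFinset w).filter (· ∉ l)).card ≤ Fintype.card V - l.length := by
    rw [← Finset.card_union_of_disjoint, ← List.toFinset_card_of_nodup hl, ← Finset.card_compl]
    · exact Finset.card_le_card fun x => by
        simp only [Finset.mem_union, Finset.mem_filter, Finset.mem_compl, List.mem_toFinset]
        tauto
    · exact Finset.disjoint_left.2 fun x hu hw => h x (by simp_all) (by simp_all)
  rw [hdeg, hdeg]
  omega

theorem exists_isCycleMap_of_isChain_s10 {c : List V} (h3 : 3 ≤ c.length) (hn : c.Nodup)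
    (hc : c.IsChain G.Adj) (hclose : ∀ x ∈ c.getLast?, ∀ y ∈ c.head?, G.Adj x y) :
    ∃ f : ZMod c.length → V, IsCycleMap G c.length f := by
  have : NeZero c.length := ⟨by omega⟩
  have : Fact (1 < c.length) := ⟨by omega⟩
  refine ⟨fun i => c.get ⟨i.val, ZMod.val_lt i⟩, h3,
    fun i j hij => ZMod.val_injective _ (hn.getElem_inj_iff.1 hij), fun i => ?_⟩
  have hsucc : (i + 1).val = (i.val + 1) % c.length := by rw [ZMod.val_add, ZMod.val_one]
  have hi := ZMod.val_lt i
  rcases Nat.lt_or_ge (i.val + 1) c.length with h | h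
  · simp only [hsucc, Nat.mod_eq_of_lt h]
    exact List.isChain_iff_getElem.1 hc _ h
  · have hlast : i.val = c.length - 1 := by omega
    simp only [hsucc, hlast, Nat.sub_add_cancel (by omega : 1 ≤ c.length), Nat.mod_self]
    apply hclose
    · simp [List.getLast?_eq_getElem?]
    · simp [List.head?_eq_getElem?]

section CycleArc

variable {m : ℕ}

def cycleArc (f : ZMod m → V) (a : ZMod m) (k : ℕ) : List V :=
  (List.range k).map fun i : ℕ => f (a + i)

variable {f : ZMod m → V} {a : ZMod m} {k j : ℕ}

@[simp]
theorem cycleArc_zero : cycleArc f a 0 = [] := rfl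

theorem cycleArc_add : cycleArc f a (k + j) = cycleArc f a k ++ cycleArc f (a + k) j := by
  simp [cycleArc, List.range_add, add_assoc]

theorem cycleArc_succ_eq_cons : cycleArc f a (k + 1) = f a :: cycleArc f (a + 1) k := by
  rw [add_comm, cycleArc_add]
  simp [cycleArc]

theorem getLast?_cycleArc_succ : (cycleArc f a (k + 1)).getLast? = some (f (a + k)) := by
  simp [cycleArc, List.range_succ]

theorem mem_range_of_mem_cycleArc {x : V} (hx : x ∈ cycleArc f a k) : x ∈ Set.range f := by
  obtain ⟨i, -, rfl⟩ := List.mem_map.1 hx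
  exact ⟨_, rfl⟩

theorem isChain_cycleArc (hf : ∀ i, G.Adj (f i) (f (i + 1))) :
    (cycleArc f a k).IsChain G.Adj := by
  rw [cycleArc, List.isChain_map, List.isChain_iff_getElem]
  intro i hi
  simpa [add_assoc] using hf (a + i)

theorem nodup_cycleArc (hf : Function.Injective f) (hk : k ≤ m) : (cycleArc f a k).Nodup := by
  refine List.nodup_range.map_on fun i hi j hj hij => ?_
  have := (ZMod.natCast_eq_natCast_iff' _ _ _).1 (add_left_cancel (hf hij))
  rwa [Nat.mod_eq_of_lt ((List.mem_range.1 hi).trans_le hk),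
    Nat.mod_eq_of_lt ((List.mem_range.1 hj).trans_le hk)] at this

end CycleArc

theorem IsCycleMap.comp_neg {m : ℕ} {f : ZMod m → V} (hf : IsCycleMap G m f) :
    IsCycleMap G m (fun i => f (-i)) := by
  refine ⟨hf.1, fun i j h => neg_injective (hf.2.1 h), fun i => ?_⟩
  simpa [sub_eq_add_neg, add_comm] using (hf.2.2 (-i - 1)).symm

theorem IsCycleMap.exists_longer_path {m : ℕ} {f : ZMod m → V} (hf : IsCycleMap G m f)
    {a b : ZMod m} (hab : a ≠ b) (p : G.Walk (f a) (f b)) (hp : p.IsPath) (hlen : 2 ≤ p.length)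
    (hint : ∀ x ∈ p.support, x ≠ f a → x ≠ f b → x ∉ Set.range f) :
    ∃ l : List V, l.Nodup ∧ l.IsChain G.Adj ∧ m < l.length ∧
      l.head? = some (f (b - 1)) ∧ l.getLast? = some (f (a - 1)) := by
  have : NeZero m := ⟨by have := hf.1; omega⟩
  obtain ⟨k, j, hb, ha, hkj⟩ := ZMod.exists_eq_add_of_ne hab
  obtain ⟨I, hI⟩ := p.exists_support_eq_cons_append (by omega)
  have hIlen : I.length + 1 = p.length := by simpa [hI] using p.length_support
  have hnodup := hp.support_nodup
  simp only [hI, List.nodup_cons, List.nodup_append, List.mem_append, List.mem_singleton,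
    not_or] at hnodup
  obtain ⟨⟨hIa, -⟩, hInodup, -, hIb⟩ := hnodup
  have hIout : ∀ x ∈ I, x ∉ Set.range f := fun x hx =>
    hint x (by simp [hI, hx]) (by rintro rfl; exact hIa hx) (hIb x hx _ rfl)
  have hAB : (cycleArc f a (k + 1) ++ cycleArc f b (j + 1)).Nodup := by
    have hb' : a + ((k + 1 : ℕ) : ZMod m) = b := by rw [hb]; push_cast; ring
    rw [← hb', ← cycleArc_add]
    exact nodup_cycleArc hf.2.1 (by omega)
  -- `v_j⁻, …, v_i`, then the inner vertices of `p`, then `v_j, …, v_i⁻`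
  refine ⟨(cycleArc f a (k + 1)).reverse ++ I ++ cycleArc f b (j + 1), ?_, ?_, ?_, ?_, ?_⟩
  · classical
    have hperm : ((cycleArc f a (k + 1)).reverse ++ I ++ cycleArc f b (j + 1)).Perm
        (cycleArc f a (k + 1) ++ cycleArc f b (j + 1) ++ I) :=
      List.perm_iff_count.2 fun x => by simp only [List.count_append, List.count_reverse]; omega
    refine hperm.nodup_iff.2 (List.nodup_append.2 ⟨hAB, hInodup, ?_⟩)
    rintro x hx y hy rfl
    exact hIout x hy ((List.mem_append.1 hx).elim mem_range_of_mem_cycleArc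
      mem_range_of_mem_cycleArc)
  · have : (cycleArc f a (k + 1)).reverse ++ I ++ cycleArc f b (j + 1) =
        (cycleArc f (a + 1) k).reverse ++ p.support ++ cycleArc f (b + 1) j := by
      simp [cycleArc_succ_eq_cons, hI]
    rw [this]
    refine List.isChain_append.2 ⟨List.isChain_append.2 ⟨?_, p.isChain_adj_support, ?_⟩,
      isChain_cycleArc hf.2.2, ?_⟩
    · exact List.isChain_reverse.2 ((isChain_cycleArc hf.2.2).imp fun _ _ h => h.symm)
    · cases k <;> simp [cycleArc_succ_eq_cons, hI, (hf.2.2 a).symm]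
    · cases j <;> simp [cycleArc_succ_eq_cons, List.getLast?_eq_some_getLast p.support_ne_nil,
        hf.2.2 b]
  · simp only [cycleArc, List.length_append, List.length_reverse, List.length_map,
      List.length_range]
    omega
  · simp [getLast?_cycleArc_succ, hb]
  · simp [getLast?_cycleArc_succ, ha]

namespace IsLongestCycleMap

variable {m : ℕ} {f : ZMod m → V}

theorem comp_neg (hC : IsLongestCycleMap G m f) : IsLongestCycleMap G m (fun i => f (-i)) :=
  ⟨hC.1.comp_neg, hC.2⟩

theorem length_le_of_isChain (hC : IsLongestCycleMap G m f) {c : List V} (hn : c.Nodup)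
    (hc : c.IsChain G.Adj) (hclose : ∀ x ∈ c.getLast?, ∀ y ∈ c.head?, G.Adj x y) :
    c.length ≤ m := by
  by_contra! h
  obtain ⟨g, hg⟩ := exists_isCycleMap_of_isChain_s10 (by have := hC.1.1; omega) hn hc hclose
  exact h.not_ge (hC.2 _ _ hg)

variable {l : List V} {u w : V}

theorem not_adj_of_length_lt (hC : IsLongestCycleMap G m f) (hn : l.Nodup)
    (hc : l.IsChain G.Adj) (hm : m < l.length) (hu : l.head? = some u)
    (hw : l.getLast? = some w) : ¬ G.Adj u w := fun h =>
  (hC.length_le_of_isChain hn hc (by simpa [hu, hw] using h.symm)).not_gt hm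

theorem not_adj_and_adj_of_not_mem (hC : IsLongestCycleMap G m f) (hn : l.Nodup)
    (hc : l.IsChain G.Adj) (hm : m < l.length) (hu : l.head? = some u)
    (hw : l.getLast? = some w) {x : V} (hx : x ∉ l) : ¬ (G.Adj u x ∧ G.Adj w x) := by
  rintro ⟨hux, hwx⟩
  have hcx : (l ++ [x]).IsChain G.Adj :=
    List.isChain_append.2 ⟨hc, List.isChain_singleton x, by simpa [hw] using hwx⟩
  have := hC.length_le_of_isChain (List.nodup_append.2 ⟨hn, List.nodup_singleton x, by grind⟩)
    hcx (by simpa [hu] using hux.symm)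
  simp only [List.length_append, List.length_singleton] at this
  omega

theorem isChain_not_adj_and_adj_of_length_lt (hC : IsLongestCycleMap G m f) (hn : l.Nodup)
    (hc : l.IsChain G.Adj) (hm : m < l.length) (hu : l.head? = some u)
    (hw : l.getLast? = some w) : l.IsChain fun x y => ¬ (G.Adj w x ∧ G.Adj u y) := by
  refine List.isChain_iff_forall_rel_of_append_cons_cons.2 ?_
  rintro x y l₁ l₂ rfl ⟨hwx, huy⟩
  have hu' : (l₁ ++ [x]).head? = some u := by rw [← hu]; simp
  have hw' : (y :: l₂).getLast? = some w := by simpa [List.getLast?_cons] using hw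
  obtain ⟨hc₁, hc₂⟩ := List.isChain_split.1 hc
  -- the cycle `u, …, x, w, …, y`
  have hperm : (l₁ ++ x :: (y :: l₂).reverse).Perm (l₁ ++ x :: y :: l₂) :=
    ((List.reverse_perm _).cons x).append_left l₁
  have hcross := hC.length_le_of_isChain (hperm.nodup_iff.2 hn) ?_ ?_
  · rw [hperm.length_eq] at hcross
    omega
  · refine List.isChain_split.2 ⟨hc₁, List.isChain_cons.2 ⟨?_, ?_⟩⟩
    · rw [List.head?_reverse, hw']
      simpa using hwx.symm
    · rw [List.isChain_reverse]
      exact (List.isChain_cons_cons.1 hc₂).2.imp fun _ _ h => h.symm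
  · have hhead : (l₁ ++ x :: (y :: l₂).reverse).head? = some u := by rw [← hu']; simp
    have hlast : (l₁ ++ x :: (y :: l₂).reverse).getLast? = some y := by
      simp [List.getLast?_cons]
    rw [hhead, hlast]
    simpa using huy.symm

theorem not_tEdge_of_length_lt [Fintype V] (hC : IsLongestCycleMap G m f) (hn : l.Nodup)
    (hc : l.IsChain G.Adj) (hm : m < l.length) (hu : l.head? = some u)
    (hw : l.getLast? = some w) : ¬ TEdge G u w := by
  classical
  have hinside : l.countP (G.Adj u ·) + l.countP (G.Adj w ·) ≤ l.length - 1 :=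
    List.countP_add_countP_le_length_sub_one hu hw (by simp) (by simp)
      (by simpa using hC.isChain_not_adj_and_adj_of_length_lt hn hc hm hu hw)
  have hdeg := ncard_neighborSet_add_ncard_neighborSet_le hn
    fun _ => hC.not_adj_and_adj_of_not_mem hn hc hm hu hw
  rintro ⟨-, hadj | hsum⟩
  · exact hC.not_adj_of_length_lt hn hc hm hu hw hadj
  · have : l.length ≤ Fintype.card V := hn.length_le_card
    omega

variable [Fintype V] {a b : ZMod m}

theorem not_tEdge_sub_one (hC : IsLongestCycleMap G m f) (hab : a ≠ b)
    (p : G.Walk (f a) (f b)) (hp : p.IsPath) (hlen : 2 ≤ p.length)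
    (hint : ∀ x ∈ p.support, x ≠ f a → x ≠ f b → x ∉ Set.range f) :
    ¬ TEdge G (f (a - 1)) (f (b - 1)) := by
  obtain ⟨l, hn, hc, hm, hu, hw⟩ := hC.1.exists_longer_path hab p hp hlen hint
  rw [tEdge_comm]
  exact hC.not_tEdge_of_length_lt hn hc hm hu hw

theorem not_tEdge_add_one (hC : IsLongestCycleMap G m f) (hab : a ≠ b)
    (p : G.Walk (f a) (f b)) (hp : p.IsPath) (hlen : 2 ≤ p.length)
    (hint : ∀ x ∈ p.support, x ≠ f a → x ≠ f b → x ∉ Set.range f) :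
    ¬ TEdge G (f (a + 1)) (f (b + 1)) := by
  have hrange : Set.range (fun i => f (-i)) = Set.range f :=
    (Equiv.neg (ZMod m)).surjective.range_comp f
  have := hC.comp_neg.not_tEdge_sub_one (a := -a) (b := -b) (neg_injective.ne hab)
    (p.copy (by simp) (by simp)) (by simpa) (by simpa) (by simpa [hrange] using hint)
  simpa [add_comm] using this

end IsLongestCycleMap

end

theorem lemma3b_general {V : Type*} [Fintype V] (G : SimpleGraph V)
    (m : ℕ) (f : ZMod m → V) (hC : IsLongestCycleMap G m f)
    (R : Set V) (hR : IsCompOf G (Set.range f)ᶜ R)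
    (a b : ZMod m) (hab : a ≠ b)
    (p : G.Walk (f a) (f b)) (hp : p.IsPath) (hlen : 2 ≤ p.length)
    (hint : ∀ x ∈ p.support, x ≠ f a → x ≠ f b → x ∈ R) :
    ¬ TEdge G (f (a - 1)) (f (b - 1)) ∧ ¬ TEdge G (f (a + 1)) (f (b + 1)) := by
  have hout : ∀ x ∈ p.support, x ≠ f a → x ≠ f b → x ∉ Set.range f :=
    fun x hx hxa hxb => hR.2.1 (hint x hx hxa hxb)
  exact ⟨hC.not_tEdge_sub_one hab p hp hlen hout, hC.not_tEdge_add_one hab p hp hlen hout⟩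

/-- Lemma 3(b): with `v_i = f a`, `v_j = f b` distinct vertices of a longest
cycle joined by a path whose internal vertices lie in the component `R`,
`v_i⁻v_j⁻ ∉ Ẽ(G)` and `v_i⁺v_j⁺ ∉ Ẽ(G)`. -/
theorem lemma3b {V : Type*} [Fintype V] [DecidableEq V] (G : SimpleGraph V)
    (hnh : ¬ G.IsHamiltonian)
    (m : ℕ) (f : ZMod m → V) (hC : IsLongestCycleMap G m f)
    (R : Set V) (hR : IsCompOf G (Set.range f)ᶜ R)
    (a b : ZMod m) (hab : a ≠ b)
    (p : G.Walk (f a) (f b)) (hp : p.IsPath) (hlen : 2 ≤ p.length)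
    (hint : ∀ x ∈ p.support, x ≠ f a → x ≠ f b → x ∈ R) :
    ¬ TEdge G (f (a - 1)) (f (b - 1)) ∧ ¬ TEdge G (f (a + 1)) (f (b + 1)) :=
  lemma3b_general G m f hC R hR a b hab p hp hlen hint
end

section
/- Let G be a 2-connected, claw-heavy, non-Hamiltonian graph on n vertices, C a longest cycle of G with a fixed orientation, R a component of G − V(C), and v_i, v_j distinct vertices of C joined by a path with all internal vertices in R. Then v_i⁻v_i⁺ ∈ Ẽ(G) and v_j⁻v_j⁺ ∈ Ẽ(G); moreover at least one of v_i⁻v_i⁺, v_j⁻v_j⁺ is an actual edge of G. -/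
open SimpleGraph

/-!
Call a path of length at least two between two vertices of the longest cycle `C`, with all inner
vertices off `C`, an ear. Every step reduces to the maximality of `C`: rerouting `C` through an ear
together with a chord, a second ear, or a pair of crossing chords would produce a longer cycle.
This shows that for an ear from `v` to `w` the vertices `v⁺, w⁺` have no neighbour inside the ear,
are not adjacent, have no common neighbour off `C`, and that their neighbours on `C` do not cross.
Counting neighbours along `C` then gives `d(u) + d(v⁺) < n` for the neighbour `u` of `v` on the
ear, and `d(v⁺) + d(w⁺) < n`; the same holds for predecessors by reversing `C`. In the claw at `v`
with ends `v⁻, v⁺, u` the heavy pair must therefore be `v⁻, v⁺`, and if neither `v⁻v⁺` nor `w⁻w⁺`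
were an edge, the degrees of `v⁻, v⁺, w⁻, w⁺` would sum to at least `2n`.
-/

namespace SimpleGraph.Walk

variable {V : Type*} {G : SimpleGraph V}

theorem IsPath.ne_of_length_pos {u v : V} {p : G.Walk u v} (hp : p.IsPath) (hl : 0 < p.length) :
    u ≠ v := by
  rintro rfl
  rw [(isPath_iff_nil.1 hp).length_eq_zero] at hl
  exact hl.false

theorem IsPath.append {u v w : V} {p : G.Walk u v} {q : G.Walk v w} (hp : p.IsPath)
    (hq : q.IsPath) (hpq : ∀ x ∈ p.support, x ∈ q.support → x = v) : (p.append q).IsPath := by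
  have hv : v ∉ q.support.tail := by
    have := hq.support_nodup
    rw [← cons_tail_support] at this
    exact (List.nodup_cons.1 this).1
  rw [isPath_def, support_append, List.nodup_append]
  refine ⟨hp.support_nodup, hq.support_nodup.sublist (List.tail_sublist _), ?_⟩
  rintro x hx _ hy rfl
  exact hv (hpq x hx (List.mem_of_mem_tail hy) ▸ hy)

def ofSeq (g : ℕ → V) (hg : ∀ j, G.Adj (g j) (g (j + 1))) (i : ℕ) :
    (k : ℕ) → G.Walk (g i) (g (i + k))
  | 0 => nil
  | k + 1 => (ofSeq g hg i k).concat (hg (i + k))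

section ofSeq

variable {g : ℕ → V} {hg : ∀ j, G.Adj (g j) (g (j + 1))} {i k : ℕ}

@[simp]
theorem length_ofSeq : (ofSeq g hg i k).length = k := by
  induction k with
  | zero => rfl
  | succ k ih => simp [ofSeq, ih]

theorem mem_support_ofSeq {x : V} :
    x ∈ (ofSeq g hg i k).support ↔ ∃ j, i ≤ j ∧ j ≤ i + k ∧ g j = x := by
  induction k with
  | zero =>
    simp only [ofSeq, support_nil, List.mem_singleton, add_zero]
    exact ⟨fun h => ⟨i, le_rfl, le_rfl, h.symm⟩, fun ⟨j, h1, h2, hj⟩ => by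
      rw [← hj, le_antisymm h2 h1]⟩
  | succ k ih =>
    simp only [ofSeq, support_concat, List.mem_append, ih, List.mem_singleton]
    constructor
    · rintro (⟨j, h1, h2, rfl⟩ | rfl)
      exacts [⟨j, h1, by omega, rfl⟩, ⟨i + k + 1, by omega, by omega, rfl⟩]
    · rintro ⟨j, h1, h2, rfl⟩
      rcases Nat.lt_or_ge j (i + k + 1) with h | h
      exacts [Or.inl ⟨j, h1, by omega, rfl⟩, Or.inr (by rw [show j = i + k + 1 by omega]; rfl)]

theorem isPath_ofSeq (hinj : Set.InjOn g (Set.Icc i (i + k))) : (ofSeq g hg i k).IsPath := by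
  induction k with
  | zero => exact IsPath.nil
  | succ k ih =>
    refine (ih (hinj.mono (Set.Icc_subset_Icc le_rfl (by omega)))).concat ?_ _
    rw [mem_support_ofSeq]
    rintro ⟨j, h1, h2, hj⟩
    have := hinj ⟨h1, by omega⟩ ⟨by omega, by omega⟩ hj
    omega

end ofSeq

/-- A path meeting `C` at most in its ends; an ear of `C` when both ends lie on `C`. -/
def IsCPath (C : Set V) {u v : V} (p : G.Walk u v) : Prop :=
  p.IsPath ∧ ∀ x ∈ p.support, x ∈ C → x = u ∨ x = v

namespace IsCPath

variable {C : Set V} {u v w : V}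

theorem reverse {p : G.Walk u v} (hp : p.IsCPath C) : p.reverse.IsCPath C :=
  ⟨hp.1.reverse, fun x hx hxC => (hp.2 x (by simpa using hx) hxC).symm⟩

theorem copy {u' v' : V} {p : G.Walk u v} (hp : p.IsCPath C) (hu : u = u') (hv : v = v') :
    (p.copy hu hv).IsCPath C := by
  subst hu hv
  exact hp

theorem of_adj (h : G.Adj u v) : h.toWalk.IsCPath C :=
  ⟨IsPath.of_adj h, by simp⟩

theorem cons {p : G.Walk v w} (hp : p.IsCPath C) (h : G.Adj u v) (hv : v ∉ C)
    (hu : u ∉ p.support) : (cons h p).IsCPath C := by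
  refine ⟨hp.1.cons hu, fun x hx hxC => ?_⟩
  rcases List.mem_cons.1 (by simpa using hx) with rfl | hx
  · exact Or.inl rfl
  · rcases hp.2 x hx hxC with rfl | rfl
    exacts [absurd hxC hv, Or.inr rfl]

theorem of_adj_adj (h₁ : G.Adj u v) (h₂ : G.Adj v w) (hv : v ∉ C) (huw : u ≠ w) :
    (Walk.cons h₁ h₂.toWalk).IsCPath C :=
  (of_adj h₂).cons h₁ hv (by simp [h₁.ne, huw])

theorem exists_adj_start {p : G.Walk u v} (hp : p.IsCPath C) (hl : 2 ≤ p.length) :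
    ∃ x ∈ p.support, x ∉ C ∧ G.Adj u x := by
  refine ⟨p.getVert 1, p.getVert_mem_support 1, fun hC => ?_, ?_⟩
  · have hinj := hp.1.getVert_injOn
    rcases hp.2 _ (p.getVert_mem_support 1) hC with h | h
    · have := hinj (by simp; omega) (by simp) (h.trans p.getVert_zero.symm)
      omega
    · have := hinj (by simp; omega) (le_refl p.length) (h.trans p.getVert_length.symm)
      omega
  · simpa using p.adj_getVert_succ (i := 0) (by omega)

end IsCPath

section Arcs

variable {g : ℕ → V} (hg : ∀ j, G.Adj (g j) (g (j + 1))) {m : ℕ} (hinj : Set.InjOn g (Set.Iio m))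
include hg hinj

theorem isPath_ofSeq_of_lt {i k : ℕ} (hk : i + k < m) : (ofSeq g hg i k).IsPath :=
  isPath_ofSeq <| hinj.mono fun j hj => by
    have := hj.2
    simp only [Set.mem_Iio]
    omega

/-- The path runs down from `g s` to `g 1`, along `Q`, and up from `g (s + 1)` to `g (m - 1)`. -/
theorem exists_isPath_through_isCPath {S : Set V} (hS : ∀ j, g j ∈ S) {s : ℕ} (hs : 1 ≤ s)
    (hsm : s + 2 ≤ m) {Q : G.Walk (g 1) (g (s + 1))} (hQ : Q.IsCPath S) :
    ∃ R : G.Walk (g s) (g (m - 1)), R.IsPath ∧ m - 2 ≤ R.length ∧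
      ∀ x ∈ R.support, x ∈ Q.support ∨ ∃ j, 1 ≤ j ∧ j < m ∧ g j = x := by
  have hQg {j : ℕ} (hj : g j ∈ Q.support) (hjm : j < m) : j = 1 ∨ j = s + 1 :=
    (hQ.2 _ hj (hS j)).imp (hinj hjm (by simp; omega)) (hinj hjm (by simp; omega))
  let D : G.Walk (g s) (g 1) := (ofSeq g hg 1 (s - 1)).reverse.copy (congrArg g (by omega)) rfl
  let U : G.Walk (g (s + 1)) (g (m - 1)) :=
    (ofSeq g hg (s + 1) (m - s - 2)).copy rfl (congrArg g (by omega))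
  have memD {x} : x ∈ D.support ↔ ∃ j, 1 ≤ j ∧ j ≤ 1 + (s - 1) ∧ g j = x := by
    simp only [D, support_copy, support_reverse, List.mem_reverse, mem_support_ofSeq]
  have memU {x} : x ∈ U.support ↔ ∃ j, s + 1 ≤ j ∧ j ≤ s + 1 + (m - s - 2) ∧ g j = x := by
    simp only [U, support_copy, mem_support_ofSeq]
  have hQU : ∀ x ∈ Q.support, x ∈ U.support → x = g (s + 1) := by
    intro x hxQ hxU
    obtain ⟨j, hj1, hj2, rfl⟩ := memU.1 hxU
    rcases hQg hxQ (by omega) with rfl | rfl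
    · omega
    · rfl
  have hDQU : ∀ x ∈ D.support, x ∈ (Q.append U).support → x = g 1 := by
    intro x hxD hx
    obtain ⟨j, hj1, hj2, rfl⟩ := memD.1 hxD
    rcases (mem_support_append_iff _ _).1 hx with hxQ | hxU
    · rcases hQg hxQ (by omega) with rfl | rfl
      · rfl
      · omega
    · obtain ⟨j', hj1', hj2', h⟩ := memU.1 hxU
      have := hinj (by simp; omega) (by simp; omega) h
      omega
  have hQl : Q.length ≠ 0 := fun h => by
    have := hinj (by simp; omega) (by simp; omega) (Walk.eq_of_length_eq_zero h)
    omega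
  refine ⟨D.append (Q.append U),
    ((isPath_copy _ _ _).2 (isPath_ofSeq_of_lt hg hinj (by omega)).reverse).append
      (hQ.1.append ((isPath_copy _ _ _).2 (isPath_ofSeq_of_lt hg hinj (by omega))) hQU) hDQU,
    ?_, fun x hx => ?_⟩
  · simp only [length_append, D, U, length_copy, length_reverse, length_ofSeq]
    omega
  · simp only [mem_support_append_iff, memD, memU] at hx
    rcases hx with ⟨j, hj1, hj2, rfl⟩ | hxQ | ⟨j, hj1, hj2, rfl⟩
    exacts [Or.inr ⟨j, hj1, by omega, rfl⟩, Or.inl hxQ, Or.inr ⟨j, by omega, by omega, rfl⟩]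

/-- The path runs down from `g s` to `g (t + 1)`, jumps to `g 1`, runs up to `g t`, jumps to
`g (s + 1)` and runs up to `g (m - 1)`. -/
theorem exists_isPath_of_crossing_chords {s t : ℕ} (hsm : s + 2 ≤ m) (ht : 1 ≤ t) (hts : t < s)
    (h₁ : G.Adj (g t) (g (s + 1))) (h₂ : G.Adj (g (t + 1)) (g 1)) :
    ∃ R : G.Walk (g s) (g (m - 1)), R.IsPath ∧ m - 2 ≤ R.length ∧
      ∀ x ∈ R.support, ∃ j, 1 ≤ j ∧ j < m ∧ g j = x := by
  have hinj' {i j : ℕ} (h : g i = g j) (hi : i < m) (hj : j < m) : i = j := hinj hi hj h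
  let D : G.Walk (g s) (g (t + 1)) :=
    (ofSeq g hg (t + 1) (s - t - 1)).reverse.copy (congrArg g (by omega)) rfl
  let A : G.Walk (g 1) (g t) := (ofSeq g hg 1 (t - 1)).copy rfl (congrArg g (by omega))
  let U : G.Walk (g (s + 1)) (g (m - 1)) :=
    (ofSeq g hg (s + 1) (m - s - 2)).copy rfl (congrArg g (by omega))
  have memD {x} : x ∈ D.support ↔ ∃ j, t + 1 ≤ j ∧ j ≤ t + 1 + (s - t - 1) ∧ g j = x := by
    simp only [D, support_copy, support_reverse, List.mem_reverse, mem_support_ofSeq]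
  have memA {x} : x ∈ A.support ↔ ∃ j, 1 ≤ j ∧ j ≤ 1 + (t - 1) ∧ g j = x := by
    simp only [A, support_copy, mem_support_ofSeq]
  have memU {x} : x ∈ U.support ↔ ∃ j, s + 1 ≤ j ∧ j ≤ s + 1 + (m - s - 2) ∧ g j = x := by
    simp only [U, support_copy, mem_support_ofSeq]
  have hA : (cons h₂ A).IsPath := by
    refine ((isPath_copy _ _ _).2 (isPath_ofSeq_of_lt hg hinj (by omega))).cons fun hx => ?_
    obtain ⟨j, hj1, hj2, h⟩ := memA.1 hx
    have := hinj' h (by omega) (by omega)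
    omega
  have hU : (cons h₁ U).IsPath := by
    refine ((isPath_copy _ _ _).2 (isPath_ofSeq_of_lt hg hinj (by omega))).cons fun hx => ?_
    obtain ⟨j, hj1, hj2, h⟩ := memU.1 hx
    have := hinj' h (by omega) (by omega)
    omega
  have hAU : ∀ x ∈ (cons h₂ A).support, x ∈ (cons h₁ U).support → x = g t := by
    intro x hx hx'
    rw [support_cons, List.mem_cons, memA] at hx
    rw [support_cons, List.mem_cons, memU] at hx'
    rcases hx with rfl | ⟨j, hj1, hj2, rfl⟩ <;> rcases hx' with h | ⟨j', hj1', hj2', h⟩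
    all_goals first
      | exact h
      | (have := hinj' h (by omega) (by omega); omega)
  have hDAU : ∀ x ∈ D.support, x ∈ ((cons h₂ A).append (cons h₁ U)).support → x = g (t + 1) := by
    intro x hx hx'
    obtain ⟨j, hj1, hj2, rfl⟩ := memD.1 hx
    simp only [mem_support_append_iff, support_cons, List.mem_cons, memA, memU] at hx'
    rcases hx' with (h | ⟨j', _, _, h⟩) | (h | ⟨j', _, _, h⟩)
    all_goals first
      | exact h
      | (have := hinj' h (by omega) (by omega); omega)
  refine ⟨D.append ((cons h₂ A).append (cons h₁ U)),
    ((isPath_copy _ _ _).2 (isPath_ofSeq_of_lt hg hinj (by omega)).reverse).append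
      (hA.append hU hAU) hDAU, ?_, fun x hx => ?_⟩
  · simp only [length_append, D, A, U, length_copy, length_reverse, length_ofSeq, length_cons]
    omega
  · simp only [mem_support_append_iff, support_cons, List.mem_cons, memD, memA, memU] at hx
    rcases hx with ⟨j, _, _, rfl⟩ | (rfl | ⟨j, _, _, rfl⟩) | (rfl | ⟨j, _, _, rfl⟩)
    all_goals exact ⟨_, by omega, by omega, rfl⟩

end Arcs

end SimpleGraph.Walk

open SimpleGraph Walk Finset

theorem Finset.card_filter_range_add_card_filter_range_le {s : ℕ} (p q : ℕ → Prop)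
    [DecidablePred p] [DecidablePred q] (hp : ¬ p 0) (hpq : ∀ j, j + 1 < s → q j → ¬ p (j + 1)) :
    #{j ∈ range s | p j} + #{j ∈ range s | q j} ≤ s := by
  set X := {j ∈ range s | p j}
  set Y := {j ∈ range s | q j}.image (· + 1)
  have hX : X ⊆ Icc 1 s := fun j hj => by
    simp only [X, mem_filter, mem_range] at hj
    have : j ≠ 0 := fun h => hp (h ▸ hj.2)
    simp only [mem_Icc]
    omega
  have hY : Y ⊆ Icc 1 s := fun j hj => by
    simp only [Y, mem_image, mem_filter, mem_range] at hj
    obtain ⟨i, ⟨hi, -⟩, rfl⟩ := hj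
    simp only [mem_Icc]
    omega
  have hXY : Disjoint X Y := by
    rw [disjoint_left]
    intro j hjX hjY
    simp only [X, Y, mem_image, mem_filter, mem_range] at hjX hjY
    obtain ⟨i, ⟨hi, hqi⟩, rfl⟩ := hjY
    exact hpq i hjX.1 hqi hjX.2
  calc #X + #{j ∈ range s | q j} = #(X ∪ Y) := by
        rw [card_union_of_disjoint hXY, card_image_of_injective _ (add_left_injective 1)]
    _ ≤ #(Icc 1 s) := card_le_card (union_subset hX hY)
    _ = s := by simp

theorem Finset.card_filter_range_add (p : ℕ → Prop) [DecidablePred p] (s r : ℕ) :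
    #{j ∈ range (s + r) | p j} = #{j ∈ range s | p j} + #{j ∈ range r | p (s + j)} := by
  simp only [card_filter, sum_range_add]

theorem ZMod.card_filter_eq_card_filter_range {m : ℕ} [NeZero m] (p : ZMod m → Prop)
    [DecidablePred p] (c : ZMod m) : #{e | p e} = #{j ∈ range m | p (c + ((j : ℕ) : ZMod m))} := by
  refine card_bij' (fun e _ => (e - c).val) (fun j _ => c + j) (fun e he => ?_) (fun j hj => ?_)
    (fun e _ => ?_) (fun j hj => ?_)
  · simp only [mem_filter, mem_univ, true_and] at he ⊢
    simpa [ZMod.val_lt] using he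
  · simp only [mem_filter] at hj
    simpa using hj.2
  · simp
  · simp only [mem_filter, mem_range] at hj
    simp [Nat.mod_eq_of_lt hj.1]

theorem SimpleGraph.ncard_neighborSet_add_lt {V : Type*} [Fintype V] {G : SimpleGraph V}
    {S : Set V} {x y w : V} (hw : w ∉ S) (hxw : ¬ G.Adj x w) (hyw : ¬ G.Adj y w)
    (hxy : ∀ z ∉ S, G.Adj x z → G.Adj y z → False)
    (hS : (G.neighborSet x ∩ S).ncard + (G.neighborSet y ∩ S).ncard ≤ S.ncard) :
    (G.neighborSet x).ncard + (G.neighborSet y).ncard < Fintype.card V := by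
  have hsplit (v : V) := Set.ncard_inter_add_ncard_sdiff_eq_ncard (G.neighborSet v) S
  have hdisj : Disjoint (G.neighborSet x \ S) (G.neighborSet y \ S) :=
    Set.disjoint_left.2 fun z hx hy => hxy z hx.2 hx.1 hy.1
  have hsub : G.neighborSet x \ S ∪ G.neighborSet y \ S ⊆ (insert w S)ᶜ := by
    rintro z (⟨hz, hzS⟩ | ⟨hz, hzS⟩) (rfl | hz')
    exacts [hxw hz, hzS hz', hyw hz, hzS hz']
  have hout := Set.ncard_le_ncard hsub
  rw [Set.ncard_union_eq hdisj] at hout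
  have hcompl := Set.ncard_add_ncard_compl (insert w S)
  rw [Set.ncard_insert_of_notMem hw, Nat.card_eq_fintype_card] at hcompl
  rw [← hsplit x, ← hsplit y]
  omega

section Cycle

variable {V : Type*} {G : SimpleGraph V} {m : ℕ} {f : ZMod m → V}

def cycleSeq (f : ZMod m → V) (a : ZMod m) (j : ℕ) : V := f (a + j)

@[simp]
theorem cycleSeq_zero (a : ZMod m) : cycleSeq f a 0 = f a := by simp [cycleSeq]

theorem range_comp_neg : Set.range (fun i => f (-i)) = Set.range f :=
  neg_surjective.range_comp f

namespace IsCycleMap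

variable (hC : IsCycleMap G m f)
include hC

theorem neg : IsCycleMap G m (fun i => f (-i)) := by
  refine ⟨hC.1, fun i j h => neg_injective (hC.2.1 h), fun i => ?_⟩
  simpa [neg_add_rev, add_comm, ← sub_eq_add_neg] using (hC.2.2 (-i - 1)).symm

theorem adj_sub_one (a : ZMod m) : G.Adj (f (a - 1)) (f a) := by
  simpa using hC.2.2 (a - 1)

theorem exists_eq_add (a b : ZMod m) : ∃ s < m, b = a + s := by
  have : NeZero m := ⟨by have := hC.1; omega⟩
  exact ⟨(b - a).val, ZMod.val_lt _, by rw [ZMod.natCast_zmod_val]; ring⟩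

theorem injOn_cycleSeq (a : ZMod m) : Set.InjOn (cycleSeq f a) (Set.Iio m) := fun i hi j hj h => by
  have := (ZMod.natCast_eq_natCast_iff' i j m).1 (add_left_cancel (hC.2.1 h))
  rwa [Nat.mod_eq_of_lt hi, Nat.mod_eq_of_lt hj] at this

theorem apply_add_ne (a : ZMod m) {i j : ℕ} (hi : i < m) (hj : j < m) (hij : i ≠ j) :
    f (a + i) ≠ f (a + j) :=
  fun h => hij (hC.injOn_cycleSeq a hi hj h)

theorem apply_ne_apply_add_one (a : ZMod m) : f a ≠ f (a + 1) := by
  have := hC.1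
  simpa using hC.apply_add_ne a (i := 0) (j := 1) (by omega) (by omega) (by omega)

theorem apply_sub_one_ne_apply_add_one (a : ZMod m) : f (a - 1) ≠ f (a + 1) := by
  have := hC.1
  have h := hC.apply_add_ne (a - 1) (i := 0) (j := 2) (by omega) (by omega) (by omega)
  rwa [Nat.cast_zero, add_zero, show a - 1 + ((2 : ℕ) : ZMod m) = a + 1 by push_cast; ring] at h

theorem adj_cycleSeq (a : ZMod m) (j : ℕ) : G.Adj (cycleSeq f a j) (cycleSeq f a (j + 1)) := by
  simpa [cycleSeq, add_assoc] using hC.2.2 (a + j)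

theorem adj_cycleSeq_pred_zero (a : ZMod m) : G.Adj (cycleSeq f a (m - 1)) (cycleSeq f a 0) := by
  have := hC.1
  simpa [cycleSeq, Nat.cast_sub (show 1 ≤ m by omega), sub_eq_add_neg] using hC.adj_sub_one a

theorem eq_or_eq_of_mem_support (a : ZMod m) {i i' j : ℕ}
    {P : G.Walk (cycleSeq f a i) (cycleSeq f a i')} (hP : P.IsCPath (Set.range f))
    (hj : cycleSeq f a j ∈ P.support) (hjm : j < m) (him : i < m) (him' : i' < m) :
    j = i ∨ j = i' :=
  (hP.2 _ hj ⟨_, rfl⟩).imp (hC.injOn_cycleSeq a hjm him) (hC.injOn_cycleSeq a hjm him')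

theorem ncard_neighborSet_inter_range [DecidableRel G.Adj] (y : V) (c : ZMod m) :
    (G.neighborSet y ∩ Set.range f).ncard = #{j ∈ range m | G.Adj y (f (c + (j : ℕ)))} := by
  have : NeZero m := ⟨by have := hC.1; omega⟩
  have himage : G.neighborSet y ∩ Set.range f = f '' ↑({e | G.Adj y (f e)} : Finset (ZMod m)) := by
    ext x
    simp only [Set.mem_inter_iff, mem_neighborSet, Set.mem_range, coe_filter, mem_univ, true_and,
      Set.mem_image]
    constructor
    · rintro ⟨hx, e, rfl⟩
      exact ⟨e, hx, rfl⟩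
    · rintro ⟨e, he, rfl⟩
      exact ⟨he, e, rfl⟩
  rw [himage, Set.ncard_image_of_injective _ hC.2.1, Set.ncard_coe_finset,
    ZMod.card_filter_eq_card_filter_range _ c]

end IsCycleMap

theorem IsLongestCycleMap.neg (hC : IsLongestCycleMap G m f) :
    IsLongestCycleMap G m (fun i => f (-i)) :=
  ⟨hC.1.neg, hC.2⟩

theorem IsLongestCycleMap.length_lt (hC : IsLongestCycleMap G m f) {x y : V} {W : G.Walk x y}
    (hW : W.IsPath) (hyx : G.Adj y x) (hl : 2 ≤ W.length) : W.length < m := by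
  have hinj := hW.getVert_injOn
  have hval (i : ZMod (W.length + 1)) : i.val ≤ W.length := Nat.lt_succ_iff.1 (ZMod.val_lt i)
  refine Nat.lt_of_succ_le (hC.2 _ (fun i => W.getVert i.val) ⟨by omega, ?_, fun i => ?_⟩)
  · exact fun i j h => ZMod.val_injective _ (hinj (hval i) (hval j) h)
  · have : Fact (1 < W.length + 1) := ⟨by omega⟩
    simp only [ZMod.val_add, ZMod.val_one]
    rcases (hval i).lt_or_eq with hi | hi
    · rw [Nat.mod_eq_of_lt (by omega)]
      exact W.adj_getVert_succ hi
    · rw [hi, Nat.mod_self, W.getVert_zero, W.getVert_length]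
      exact hyx

end Cycle

namespace IsLongestCycleMap

variable {V : Type*} {G : SimpleGraph V} {m : ℕ} {f : ZMod m → V}
  (hC : IsLongestCycleMap G m f) {a b : ZMod m} {P : G.Walk (f a) (f b)}
  (hP : P.IsCPath (Set.range f)) (hPl : 2 ≤ P.length)
include hC hP hPl

/-- `R` ends at `f (a - 1)`, so `P`, `R` and the edge back to `f a` form a cycle. -/
theorem length_add_lt_of_isCPath {s : ℕ} (hb : b = a + s) (hsm : s < m)
    {R : G.Walk (cycleSeq f a s) (cycleSeq f a (m - 1))} (hR : R.IsPath)
    (hRP : ∀ x ∈ R.support, x ∈ P.support → ∃ j, 1 ≤ j ∧ j < m ∧ cycleSeq f a j = x) :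
    P.length + R.length < m := by
  subst hb
  let P' : G.Walk (cycleSeq f a 0) (cycleSeq f a s) :=
    P.copy (by simp) (show f (a + s) = cycleSeq f a s from rfl)
  have hP' : P'.IsCPath (Set.range f) := hP.copy _ _
  have hW : (P'.append R).IsPath := hP'.1.append hR fun x hxP hxR => by
    obtain ⟨j, hj1, hjm, rfl⟩ := hRP x hxR (by simpa only [P', support_copy] using hxP)
    rcases hC.1.eq_or_eq_of_mem_support a hP' hxP hjm (by omega) hsm with h | rfl
    · omega
    · rfl
  have hlen : (P'.append R).length = P.length + R.length := by
    simp only [length_append, P', length_copy]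
  rw [← hlen]
  exact hC.length_lt hW (hC.1.adj_cycleSeq_pred_zero a) (by omega)

theorem not_isCPath_succ_succ {s : ℕ} (hb : b = a + s) (hs : 1 ≤ s) (hsm : s + 2 ≤ m)
    {Q : G.Walk (f (a + 1)) (f (b + 1))} (hQP : ∀ x ∈ Q.support, x ∈ P.support → x = f (a + 1)) :
    ¬ Q.IsCPath (Set.range f) := by
  intro hQ
  subst hb
  obtain ⟨R, hR, hRl, hRQ⟩ := exists_isPath_through_isCPath (hC.1.adj_cycleSeq a)
    (hC.1.injOn_cycleSeq a) (S := Set.range f) (fun j => ⟨_, rfl⟩) hs hsm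
    (hQ.copy (by simp [cycleSeq]) (by simp [cycleSeq, add_assoc]))
  have := hC.length_add_lt_of_isCPath hP hPl rfl (by omega) hR fun x hx hxP => by
    rcases hRQ x hx with hxQ | hj
    · have := hQP x (by simpa using hxQ) hxP
      exact ⟨1, le_rfl, by omega, by simpa [cycleSeq] using this.symm⟩
    · exact hj
  omega

theorem not_adj_of_crossing {s t : ℕ} (hb : b = a + s) (hsm : s + 2 ≤ m) (ht : 1 ≤ t)
    (hts : t < s) (h₁ : G.Adj (f (a + t)) (f (b + 1))) : ¬ G.Adj (f (a + t + 1)) (f (a + 1)) := by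
  intro h₂
  subst hb
  obtain ⟨R, hR, hRl, hRC⟩ := exists_isPath_of_crossing_chords (hC.1.adj_cycleSeq a)
    (hC.1.injOn_cycleSeq a) hsm ht hts
    (by convert h₁ using 2 <;> simp [cycleSeq, add_assoc])
    (by convert h₂ using 2 <;> simp [cycleSeq, add_assoc])
  have := hC.length_add_lt_of_isCPath hP hPl rfl (by omega) hR fun x hx _ => hRC x hx
  omega

theorem ne_add_one : b ≠ a + 1 := by
  rintro rfl
  have hm := hC.1.1
  refine hC.not_isCPath_succ_succ hP hPl (s := 1) (by simp) le_rfl (by omega)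
    (fun x hx hxP => ?_) (IsCPath.of_adj (hC.1.2.2 (a + 1)))
  simp only [Adj.toWalk, support_cons, support_nil, List.mem_cons, List.not_mem_nil, or_false] at hx
  rcases hx with rfl | rfl
  · rfl
  · rcases hP.2 _ hxP ⟨_, rfl⟩ with h | h
    · have hne : f a ≠ f (a + 1 + 1) := by simpa using hC.1.apply_sub_one_ne_apply_add_one (a + 1)
      exact (hne h.symm).elim
    · exact (hC.1.apply_ne_apply_add_one (a + 1) h.symm).elim

theorem exists_eq_add_of_isCPath : ∃ s : ℕ, b = a + s ∧ 2 ≤ s ∧ s + 2 ≤ m := by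
  obtain ⟨s, hsm, rfl⟩ := hC.1.exists_eq_add a b
  refine ⟨s, rfl, ?_, ?_⟩
  · by_contra! hs
    interval_cases s
    · exact hP.1.ne_of_length_pos (by omega) (by simp)
    · exact hC.ne_add_one hP hPl (by simp)
  · by_contra! hs
    refine hC.ne_add_one hP.reverse (by simpa using hPl) ?_
    rw [show s = m - 1 by omega, Nat.cast_sub (by omega), ZMod.natCast_self]
    ring

theorem succ_notMem_support : f (b + 1) ∉ P.support := by
  intro h
  rcases hP.2 _ h ⟨_, rfl⟩ with h | h
  · exact hC.ne_add_one hP.reverse (by simpa using hPl) (hC.1.2.1 h).symm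
  · exact hC.1.apply_ne_apply_add_one b h.symm

theorem not_adj_succ_succ : ¬ G.Adj (f (a + 1)) (f (b + 1)) := fun h => by
  obtain ⟨s, hb, hs, hsm⟩ := hC.exists_eq_add_of_isCPath hP hPl
  refine hC.not_isCPath_succ_succ hP hPl hb (by omega) hsm (fun x hx hxP => ?_) (IsCPath.of_adj h)
  simp only [Adj.toWalk, support_cons, support_nil, List.mem_cons, List.not_mem_nil, or_false] at hx
  rcases hx with rfl | rfl
  · rfl
  · exact absurd hxP (hC.succ_notMem_support hP hPl)

theorem not_adj_succ_of_adj_succ {z : V} (hz : z ∉ Set.range f) (hzP : z ∉ P.support)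
    (h : G.Adj (f (a + 1)) z) : ¬ G.Adj z (f (b + 1)) := fun h' => by
  obtain ⟨s, hb, hs, hsm⟩ := hC.exists_eq_add_of_isCPath hP hPl
  have hab : f (a + 1) ≠ f (b + 1) := fun e =>
    hP.1.ne_of_length_pos (by omega) (congrArg f (add_right_cancel (hC.1.2.1 e)))
  refine hC.not_isCPath_succ_succ hP hPl hb (by omega) hsm (Q := cons h h'.toWalk)
    (fun x hx hxP => ?_) (IsCPath.of_adj_adj h h' hz hab)
  simp only [Adj.toWalk, support_cons, support_nil, List.mem_cons, List.not_mem_nil, or_false] at hx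
  rcases hx with rfl | rfl | rfl
  · rfl
  · exact absurd hxP hzP
  · exact absurd hxP (hC.succ_notMem_support hP hPl)

/-- The segment of `P` from its end to `x`, followed by the edge to the successor of that end, is
an ear between consecutive vertices of the cycle. -/
theorem not_adj_succ_of_mem {x : V} (hx : x ∈ P.support) (hxC : x ∉ Set.range f) :
    ¬ G.Adj x (f (b + 1)) := by
  classical
  intro h
  have hx' : x ∈ P.reverse.support := by simpa using hx
  have hT := hP.1.reverse.takeUntil hx'
  have hTP : (P.reverse.takeUntil x hx').support ⊆ P.support := fun y hy => by
    simpa using support_takeUntil_subset_support _ hx' hy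
  have hTl : (P.reverse.takeUntil x hx').length ≠ 0 := by
    rw [Ne, length_eq_zero_iff, nil_takeUntil]
    exact fun h => hxC ⟨b, h⟩
  refine hC.ne_add_one (P := (P.reverse.takeUntil x hx').concat h)
    ⟨hT.concat (fun hb => hC.succ_notMem_support hP hPl (hTP hb)) h, fun y hy hyC => ?_⟩
    (by rw [length_concat]; omega) rfl
  rw [support_concat, List.mem_append, List.mem_singleton] at hy
  rcases hy with hy | rfl
  · rcases hP.2 y (hTP hy) hyC with rfl | rfl
    · exact absurd hy (endpoint_notMem_support_takeUntil hP.1.reverse hx' fun h => hxC ⟨a, h⟩)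
    · exact Or.inl rfl
  · exact Or.inr rfl

theorem card_filter_adj_add_card_filter_adj_le [DecidableRel G.Adj] {s : ℕ} (hb : b = a + s)
    (hsm : s + 2 ≤ m) :
    #{j ∈ range s | G.Adj (f (a + 1)) (f (a + 1 + (j : ℕ)))} +
      #{j ∈ range s | G.Adj (f (b + 1)) (f (a + 1 + (j : ℕ)))} ≤ s := by
  refine card_filter_range_add_card_filter_range_le _ _ (by simp) fun j hj hq hp => ?_
  refine hC.not_adj_of_crossing hP hPl hb hsm (t := j + 1) (by omega) hj ?_ ?_
  · convert hq.symm using 2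
    push_cast
    ring
  · convert hp.symm using 2
    push_cast
    ring

end IsLongestCycleMap

namespace IsLongestCycleMap

variable {V : Type*} [Fintype V] {G : SimpleGraph V} {m : ℕ} {f : ZMod m → V}
  (hC : IsLongestCycleMap G m f)
include hC

/-- Shifting by one along the cycle maps the cycle neighbours of `u` to non-neighbours of
`f (c + 1)`. -/
theorem ncard_neighborSet_add_lt_of_adj {c : ZMod m} {u : V} (hu : u ∉ Set.range f)
    (hcu : G.Adj (f c) u) :
    (G.neighborSet u).ncard + (G.neighborSet (f (c + 1))).ncard < Fintype.card V := by
  classical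
  have hm := hC.1.1
  have hne {e : ZMod m} (he : e ≠ c) : f c ≠ f e := fun h => he (hC.1.2.1 h).symm
  refine ncard_neighborSet_add_lt hu G.irrefl (fun h => ?_) (fun z hz huz hz1 => ?_) ?_
  · exact hC.ne_add_one (IsCPath.of_adj_adj hcu h.symm hu (hC.1.apply_ne_apply_add_one c))
      (by simp) rfl
  · refine hC.ne_add_one (P := cons hcu (cons huz hz1.symm.toWalk))
      ((IsCPath.of_adj_adj huz hz1.symm hz fun h => hu ⟨_, h.symm⟩).cons hcu hu ?_) (by simp) rfl
    simp only [Adj.toWalk, support_cons, support_nil, List.mem_cons, List.not_mem_nil, or_false]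
    rintro (h | h | h)
    exacts [hu ⟨_, h⟩, hz ⟨_, h⟩, hC.1.apply_ne_apply_add_one c h]
  · rw [hC.1.ncard_neighborSet_inter_range u (c + 1),
      hC.1.ncard_neighborSet_inter_range (f (c + 1)) (c + 1),
      Set.ncard_range_of_injective hC.1.2.1, Nat.card_zmod, add_comm]
    refine card_filter_range_add_card_filter_range_le _ _ (by simp) fun j hj hq hp => ?_
    have he : c + 1 + (j : ZMod m) ≠ c := fun h =>
      hC.1.apply_add_ne c (i := j + 1) (j := 0) hj (by omega) (by omega)
        (congrArg f (by push_cast; linear_combination h))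
    exact hC.not_adj_succ_succ (IsCPath.of_adj_adj hcu hq hu (hne he)) (by simp)
      (by simpa [add_assoc] using hp)

variable {a b : ZMod m} {P : G.Walk (f a) (f b)} (hP : P.IsCPath (Set.range f))
  (hPl : 2 ≤ P.length)
include hP hPl

theorem ncard_neighborSet_succ_add_lt :
    (G.neighborSet (f (a + 1))).ncard + (G.neighborSet (f (b + 1))).ncard < Fintype.card V := by
  classical
  have hPl' : 2 ≤ P.reverse.length := by simpa using hPl
  obtain ⟨x, hxP, hxC, -⟩ := hP.exists_adj_start hPl
  refine ncard_neighborSet_add_lt hxC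
    (fun h => hC.not_adj_succ_of_mem hP.reverse hPl' (by simpa using hxP) hxC h.symm)
    (fun h => hC.not_adj_succ_of_mem hP hPl hxP hxC h.symm) (fun z hz h₁ h₂ => ?_) ?_
  · by_cases hzP : z ∈ P.support
    · exact hC.not_adj_succ_of_mem hP hPl hzP hz h₂.symm
    · exact hC.not_adj_succ_of_adj_succ hP hPl hz hzP h₁ h₂.symm
  obtain ⟨s, rfl, hs, hsm⟩ := hC.exists_eq_add_of_isCPath hP hPl
  have hsplit (y : V) : #{j ∈ range m | G.Adj y (f (a + 1 + (j : ℕ)))} =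
      #{j ∈ range s | G.Adj y (f (a + 1 + (j : ℕ)))} +
        #{j ∈ range (m - s) | G.Adj y (f (a + s + 1 + (j : ℕ)))} := by
    have := card_filter_range_add (fun j => G.Adj y (f (a + 1 + (j : ℕ)))) s (m - s)
    rw [Nat.add_sub_cancel' (by omega)] at this
    rw [this]
    congr 3
    ext j
    push_cast
    ring_nf
  have harc := hC.card_filter_adj_add_card_filter_adj_le hP hPl rfl hsm
  have harc' := hC.card_filter_adj_add_card_filter_adj_le hP.reverse hPl'
    (s := m - s) (by rw [Nat.cast_sub (by omega), ZMod.natCast_self]; ring) (by omega)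
  rw [hC.1.ncard_neighborSet_inter_range _ (a + 1), hC.1.ncard_neighborSet_inter_range _ (a + 1),
    Set.ncard_range_of_injective hC.1.2.1, Nat.card_zmod, hsplit, hsplit]
  omega

theorem ncard_neighborSet_pred_add_lt :
    (G.neighborSet (f (a - 1))).ncard + (G.neighborSet (f (b - 1))).ncard < Fintype.card V := by
  have hP' : (P.copy (by simp) (by simp) :
      G.Walk ((fun i => f (-i)) (-a)) ((fun i => f (-i)) (-b))).IsCPath
      (Set.range fun i => f (-i)) := by
    rw [range_comp_neg]
    exact hP.copy _ _
  simpa [neg_add_eq_sub] using hC.neg.ncard_neighborSet_succ_add_lt hP' (by simpa using hPl)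

theorem tEdge_pred_succ (hch : ClawHeavy G) : TEdge G (f (a - 1)) (f (a + 1)) := by
  have hm := hC.1.1
  obtain ⟨u, -, hu, hau⟩ := hP.exists_adj_start hPl
  have h01 : f (a - 1) ≠ f a := by simpa using hC.1.apply_ne_apply_add_one (a - 1)
  have h02 := hC.1.apply_sub_one_ne_apply_add_one a
  have h12 := hC.1.apply_ne_apply_add_one a
  refine ⟨h02, or_iff_not_imp_left.2 fun hadj => ?_⟩
  have hclaw : IsClaw G (f a) (f (a - 1)) (f (a + 1)) u :=
    ⟨(hC.1.adj_sub_one a).symm, hC.1.2.2 a, hau, hadj,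
      fun h => hC.ne_add_one (IsCPath.of_adj_adj h hau.symm hu h01) (by simp) (by ring),
      fun h => hC.ne_add_one (IsCPath.of_adj_adj hau h.symm hu h12) (by simp) rfl,
      h02, fun h => hu (h ▸ ⟨_, rfl⟩), fun h => hu (h ▸ ⟨_, rfl⟩)⟩
  have hsucc := hC.ncard_neighborSet_add_lt_of_adj hu hau
  have hpred := hC.neg.ncard_neighborSet_add_lt_of_adj (c := -a) (by rwa [range_comp_neg])
    (by simpa using hau)
  rw [show -(-a + 1) = a - 1 by ring] at hpred
  rcases hch _ _ _ _ hclaw with h | h | h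
  · exact h
  all_goals omega

end IsLongestCycleMap

theorem lemma3gh_general {V : Type*} [Fintype V] (G : SimpleGraph V)
    (hch : ClawHeavy G)
    (m : ℕ) (f : ZMod m → V) (hC : IsLongestCycleMap G m f)
    (R : Set V) (hR : IsCompOf G (Set.range f)ᶜ R)
    (a b : ZMod m)
    (p : G.Walk (f a) (f b)) (hp : p.IsPath) (hlen : 2 ≤ p.length)
    (hint : ∀ x ∈ p.support, x ≠ f a → x ≠ f b → x ∈ R) :
    TEdge G (f (a - 1)) (f (a + 1)) ∧ TEdge G (f (b - 1)) (f (b + 1)) ∧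
      (G.Adj (f (a - 1)) (f (a + 1)) ∨ G.Adj (f (b - 1)) (f (b + 1))) := by
  have hP : p.IsCPath (Set.range f) :=
    ⟨hp, fun x hx hxC => by_contra fun h => hR.2.1 (hint x hx (not_or.1 h).1 (not_or.1 h).2) hxC⟩
  have hlen' : 2 ≤ p.reverse.length := by simpa using hlen
  have ha := hC.tEdge_pred_succ hP hlen hch
  have hb := hC.tEdge_pred_succ hP.reverse hlen' hch
  refine ⟨ha, hb, ?_⟩
  by_contra! hnadj
  have hsucc := hC.ncard_neighborSet_succ_add_lt hP hlen
  have hpred := hC.ncard_neighborSet_pred_add_lt hP hlen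
  have := ha.2.resolve_left hnadj.1
  have := hb.2.resolve_left hnadj.2
  omega

/-- Lemma 3(g),(h): if moreover `G` is 2-connected and claw-heavy, then
`v_i⁻v_i⁺ ∈ Ẽ(G)`, `v_j⁻v_j⁺ ∈ Ẽ(G)`, and at least one of them is an actual
edge of `G`. -/
theorem lemma3gh {V : Type*} [Fintype V] [DecidableEq V] (G : SimpleGraph V)
    (h3 : 3 ≤ Fintype.card V)
    (h2conn : ∀ v : V, (G.induce {v}ᶜ).Connected)
    (hch : ClawHeavy G)
    (hnh : ¬ G.IsHamiltonian)
    (m : ℕ) (f : ZMod m → V) (hC : IsLongestCycleMap G m f)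
    (R : Set V) (hR : IsCompOf G (Set.range f)ᶜ R)
    (a b : ZMod m) (hab : a ≠ b)
    (p : G.Walk (f a) (f b)) (hp : p.IsPath) (hlen : 2 ≤ p.length)
    (hint : ∀ x ∈ p.support, x ≠ f a → x ≠ f b → x ∈ R) :
    TEdge G (f (a - 1)) (f (a + 1)) ∧ TEdge G (f (b - 1)) (f (b + 1)) ∧
      (G.Adj (f (a - 1)) (f (a + 1)) ∨ G.Adj (f (b - 1)) (f (b + 1))) :=
  lemma3gh_general G hch m f hC R hR a b p hp hlen hint
end

section
/- Let G be a non-Hamiltonian graph on n vertices with a longest cycle C (with fixed orientation), R a component of G − V(C), and u a vertex of R. Then the set N⁺ of successors on C of neighbors of u on C contains at most one heavy vertex, and likewise the set N⁻ of predecessors contains at most one heavy vertex. -/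
open SimpleGraph

lemma modeq_helper {m s t : ℕ} (hs : 1 ≤ s) (hsm : s ≤ m) (ht : 1 ≤ t) (htm : t ≤ m)
    (h : s % m = t % m) : s = t := by
  rcases eq_or_lt_of_le hsm with rfl | hs'
  · rcases eq_or_lt_of_le htm with rfl | ht'
    · rfl
    · rw [Nat.mod_self, Nat.mod_eq_of_lt ht'] at h; omega
  · rcases eq_or_lt_of_le htm with rfl | ht'
    · rw [Nat.mod_self, Nat.mod_eq_of_lt hs'] at h; omega
    · rwa [Nat.mod_eq_of_lt hs', Nat.mod_eq_of_lt ht'] at h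

lemma natCast_zmod_inj {m s t : ℕ} [NeZero m] (hs : 1 ≤ s) (hsm : s ≤ m) (ht : 1 ≤ t)
    (htm : t ≤ m) (h : (s : ZMod m) = t) : s = t := by
  have := congrArg ZMod.val h
  rw [ZMod.val_natCast, ZMod.val_natCast] at this
  exact modeq_helper hs hsm ht htm this

lemma zmod_cast_val {m : ℕ} [NeZero m] (a : ZMod m) : ((a.val : ℕ) : ZMod m) = a :=
  (ZMod.natCast_val a).trans (ZMod.cast_id _ _)

/-- Glue: build a cycle map from a ℕ-indexed sequence. -/
lemma glue_cycle {V : Type*} (G : SimpleGraph V) (m' : ℕ) (hm : 3 ≤ m') (g : ℕ → V)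
    (hinj : ∀ s < m', ∀ t < m', g s = g t → s = t)
    (hadj : ∀ t, t + 1 < m' → G.Adj (g t) (g (t + 1)))
    (hlast : G.Adj (g (m' - 1)) (g 0)) :
    IsCycleMap G m' (fun z : ZMod m' => g z.val) := by
  haveI : NeZero m' := ⟨by omega⟩
  refine ⟨hm, ?_, ?_⟩
  · intro a b hab
    exact ZMod.val_injective m' (hinj a.val (ZMod.val_lt a) b.val (ZMod.val_lt b) hab)
  · intro z
    have hv1 : (1 : ZMod m').val = 1 := by
      have : ((1 : ℕ) : ZMod m') = 1 := by push_cast; ring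
      rw [← this, ZMod.val_natCast, Nat.mod_eq_of_lt (by omega)]
    have h1 : (z + 1).val = (z.val + 1) % m' := by rw [ZMod.val_add, hv1]
    show G.Adj (g z.val) (g (z + 1).val)
    by_cases h : z.val + 1 < m'
    · rw [h1, Nat.mod_eq_of_lt h]; exact hadj _ h
    · have hz : z.val = m' - 1 := by have := ZMod.val_lt z; omega
      have h0 : (z.val + 1) % m' = 0 := by
        rw [hz, Nat.sub_add_cancel (by omega : 1 ≤ m'), Nat.mod_self]
      rw [h1, h0, hz]; exact hlast

lemma no_longer_s16 {V : Type*} {G : SimpleGraph V} {m : ℕ} {f : ZMod m → V}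
    (hC : IsLongestCycleMap G m f) (m' : ℕ) (hm' : m < m') (hm3 : 3 ≤ m') (g : ℕ → V)
    (hinj : ∀ s < m', ∀ t < m', g s = g t → s = t)
    (hadj : ∀ t, t + 1 < m' → G.Adj (g t) (g (t + 1)))
    (hlast : G.Adj (g (m' - 1)) (g 0)) : False := by
  have := hC.2 m' _ (glue_cycle G m' hm3 g hinj hadj hlast)
  omega

/-- `u` off the cycle cannot be adjacent to two consecutive cycle vertices. -/
lemma lemU {V : Type*} {G : SimpleGraph V} {m : ℕ} {f : ZMod m → V}
    (hC : IsLongestCycleMap G m f) {u : V} (hu : u ∉ Set.range f) (a : ZMod m)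
    (h1 : G.Adj u (f a)) (h2 : G.Adj u (f (a + 1))) : False := by
  obtain ⟨hm3, hfinj, hfadj⟩ := hC.1
  haveI : NeZero m := ⟨by omega⟩
  refine no_longer_s16 hC (m + 1) (by omega) (by omega)
    (fun t => if t = 0 then u else f (a + (t : ZMod m))) ?_ ?_ ?_
  · intro s hs t ht hst
    by_cases h0 : s = 0 <;> by_cases h0' : t = 0 <;> simp [h0, h0'] at hst ⊢
    · exact absurd ⟨_, hst.symm⟩ hu
    · exact absurd ⟨_, hst⟩ hu
    · have := hfinj hst
      have : (s : ZMod m) = t := by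
        have := sub_eq_zero.mpr this
        rwa [add_sub_add_left_eq_sub, sub_eq_zero] at this
      exact natCast_zmod_inj (by omega) (by omega) (by omega) (by omega) this
  · intro t ht
    by_cases h0 : t = 0
    · subst h0; simpa using h2
    · have hne : ¬ (t + 1 = 0) := by omega
      simp only [h0, hne, if_false]
      have : ((t + 1 : ℕ) : ZMod m) = (t : ZMod m) + 1 := by push_cast; ring
      rw [this, ← add_assoc]
      exact hfadj _
  · simp only [Nat.add_sub_cancel]
    rw [if_neg (by omega : ¬ m = 0)]
    simp only [if_true, ZMod.natCast_self, add_zero]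
    exact h1.symm

/-- Crossing lemma: chords `f(i+1)–f k` and `f(j+1)–f(k+1)` (with `k` in the
open arc from `j` round to `i`) would give a cycle of length `m+1`. -/
lemma lemX {V : Type*} {G : SimpleGraph V} {m : ℕ} {f : ZMod m → V}
    (hC : IsLongestCycleMap G m f) {u : V} (hu : u ∉ Set.range f) (i j k : ZMod m)
    (hui : G.Adj u (f i)) (huj : G.Adj u (f j))
    (hd : 1 ≤ (j - i).val) (hc : 1 ≤ (k - j).val) (hcd : (k - j).val + (j - i).val < m)
    (h1 : G.Adj (f (i + 1)) (f k)) (h2 : G.Adj (f (j + 1)) (f (k + 1))) : False := by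
  obtain ⟨hm3, hfinj, hfadj⟩ := hC.1
  haveI : NeZero m := ⟨by omega⟩
  set d := (j - i).val with hd'
  set c := (k - j).val with hc'
  set e := m - d - c with he'
  have hdm : d < m := ZMod.val_lt _
  have hcm : c < m := ZMod.val_lt _
  have he1 : 1 ≤ e := by omega
  have hdj : (d : ZMod m) = j - i := zmod_cast_val _
  have hck : (c : ZMod m) = k - j := zmod_cast_val _
  have hek : (e : ZMod m) = i - k := by
    have hsum : ((e + d + c : ℕ) : ZMod m) = ((m : ℕ) : ZMod m) := by
      rw [show e + d + c = m by omega]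
    push_cast at hsum
    rw [ZMod.natCast_self] at hsum
    rw [hdj, hck] at hsum
    linear_combination hsum
  set g : ℕ → V := fun t => if t = 0 then u else if t ≤ e then f (i + 1 - (t : ZMod m))
      else if t ≤ e + c then f (j + ((t - e : ℕ) : ZMod m))
      else f (i + ((t - e - c : ℕ) : ZMod m)) with hg
  set ν : ℕ → ℕ := fun t => if t ≤ e then m - t
      else if t ≤ e + c then d - 1 + (t - e) else t - e - c - 1 with hν
  have harg : ∀ t, 1 ≤ t → t ≤ m → ν t < m ∧ g t = f (i + 1 + (ν t : ZMod m)) := by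
    intro t ht1 htm
    rw [hg, hν]
    by_cases hA : t ≤ e
    · simp only [if_neg (by omega : ¬ t = 0), if_pos hA]
      constructor
      · omega
      · congr 1
        rw [Nat.cast_sub (by omega : t ≤ m), ZMod.natCast_self]
        ring
    · by_cases hB : t ≤ e + c
      · simp only [if_neg (by omega : ¬ t = 0), if_neg hA, if_pos hB]
        constructor
        · omega
        · congr 1
          rw [Nat.cast_add, Nat.cast_sub (by omega : 1 ≤ d), Nat.cast_one, hdj]
          ring
      · simp only [if_neg (by omega : ¬ t = 0), if_neg hA, if_neg hB]
        constructor
        · omega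
        · congr 1
          rw [show (t - e - c : ℕ) = (t - e - c - 1) + 1 by omega, Nat.cast_add]
          push_cast
          ring
  refine no_longer_s16 hC (m + 1) (by omega) (by omega) g ?_ ?_ ?_
  · intro s hs t ht hst
    by_cases hs0 : s = 0 <;> by_cases ht0 : t = 0
    · omega
    · exfalso; subst hs0
      simp only [hg, if_pos rfl] at hst
      split_ifs at hst <;> exact hu ⟨_, hst.symm⟩
    · exfalso; subst ht0
      simp only [hg, if_pos rfl] at hst
      split_ifs at hst <;> exact hu ⟨_, hst⟩
    · obtain ⟨hνs, hgs⟩ := harg s (by omega) (by omega)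
      obtain ⟨hνt, hgt⟩ := harg t (by omega) (by omega)
      rw [hgs, hgt] at hst
      have hcast : ((ν s : ℕ) : ZMod m) = ν t := add_left_cancel (hfinj hst)
      have hval : ν s = ν t := by
        have := congrArg ZMod.val hcast
        rwa [ZMod.val_natCast, ZMod.val_natCast, Nat.mod_eq_of_lt hνs,
          Nat.mod_eq_of_lt hνt] at this
      rw [hν] at hval
      simp only at hval
      split_ifs at hval <;> omega
  · intro t ht'
    have htm : t < m := by omega
    simp only [hg]
    by_cases h0 : t = 0
    · subst h0
      simp only [if_pos rfl, if_neg (by omega : ¬ (0 + 1 = 0)),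
        if_pos (by omega : 0 + 1 ≤ e)]
      rw [show ((0 + 1 : ℕ) : ZMod m) = 1 by push_cast; ring, add_sub_cancel_right]
      exact hui
    · by_cases hA : t + 1 ≤ e
      · simp only [if_neg h0, if_neg (by omega : ¬ t + 1 = 0),
          if_pos (by omega : t ≤ e), if_pos hA]
        rw [show ((t + 1 : ℕ) : ZMod m) = (t : ZMod m) + 1 by push_cast; ring]
        have h := (hfadj (i - (t : ZMod m))).symm
        convert h using 2 <;> ring
      · by_cases hE : t = e
        · subst hE
          simp only [if_neg h0, if_neg (by omega : ¬ e + 1 = 0), if_pos (le_refl e),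
            if_neg (by omega : ¬ e + 1 ≤ e), if_pos (by omega : e + 1 ≤ e + c)]
          rw [show e + 1 - e = 1 by omega]
          rw [show i + 1 - (e : ZMod m) = k + 1 by rw [hek]; ring]
          rw [show ((1 : ℕ) : ZMod m) = 1 by push_cast; ring]
          exact h2.symm
        · by_cases hB : t + 1 ≤ e + c
          · simp only [if_neg h0, if_neg (by omega : ¬ t + 1 = 0),
              if_neg (by omega : ¬ t ≤ e), if_neg (by omega : ¬ t + 1 ≤ e),
              if_pos (by omega : t ≤ e + c), if_pos hB]
            rw [show ((t + 1 - e : ℕ) : ZMod m) = ((t - e : ℕ) : ZMod m) + 1 by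
              rw [show t + 1 - e = (t - e) + 1 by omega]; push_cast; ring, ← add_assoc]
            exact hfadj _
          · by_cases hEC : t = e + c
            · subst hEC
              simp only [if_neg h0, if_neg (by omega : ¬ e + c + 1 = 0),
                if_neg (by omega : ¬ e + c ≤ e), if_pos (le_refl (e + c)),
                if_neg (by omega : ¬ e + c + 1 ≤ e), if_neg (by omega : ¬ e + c + 1 ≤ e + c)]
              rw [show e + c - e = c by omega]
              rw [show j + (c : ZMod m) = k by rw [hck]; ring]
              rw [show e + c + 1 - e - c = 1 by omega]
              rw [show ((1 : ℕ) : ZMod m) = 1 by push_cast; ring]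
              exact h1.symm
            · simp only [if_neg h0, if_neg (by omega : ¬ t + 1 = 0),
                if_neg (by omega : ¬ t ≤ e), if_neg (by omega : ¬ t + 1 ≤ e),
                if_neg (by omega : ¬ t ≤ e + c), if_neg (by omega : ¬ t + 1 ≤ e + c)]
              rw [show ((t + 1 - e - c : ℕ) : ZMod m) = ((t - e - c : ℕ) : ZMod m) + 1 by
                rw [show t + 1 - e - c = (t - e - c) + 1 by omega]; push_cast; ring,
                ← add_assoc]
              exact hfadj _
  · have hg0 : g 0 = u := by simp [hg]
    have hgm : g (m + 1 - 1) = f j := by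
      simp only [hg, Nat.add_sub_cancel]
      rw [if_neg (by omega : ¬ m = 0), if_neg (by omega : ¬ m ≤ e),
        if_neg (by omega : ¬ m ≤ e + c)]
      rw [show (m - e - c : ℕ) = d by omega]
      rw [show i + (d : ZMod m) = j by rw [hdj]; ring]
    rw [hg0, hgm]
    exact huj.symm

/-- An off-cycle common neighbor of both successors gives a cycle of length `m+2`. -/
lemma lemW {V : Type*} {G : SimpleGraph V} {m : ℕ} {f : ZMod m → V}
    (hC : IsLongestCycleMap G m f) {u x : V} (hu : u ∉ Set.range f) (hx : x ∉ Set.range f)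
    (hxu : x ≠ u) (i j : ZMod m) (hui : G.Adj u (f i)) (huj : G.Adj u (f j))
    (hd : 1 ≤ (j - i).val)
    (hx1 : G.Adj x (f (i + 1))) (hx2 : G.Adj x (f (j + 1))) : False := by
  obtain ⟨hm3, hfinj, hfadj⟩ := hC.1
  haveI : NeZero m := ⟨by omega⟩
  set d := (j - i).val with hd'
  have hdm : d < m := ZMod.val_lt _
  have hdj : (d : ZMod m) = j - i := zmod_cast_val _
  set g : ℕ → V := fun t => if t = 0 then x else if t ≤ d then f (i + (t : ZMod m))
      else if t = d + 1 then u else f (i - ((t - (d + 2) : ℕ) : ZMod m)) with hg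
  set ν : ℕ → ℕ := fun t => if t ≤ d then m - d - 1 + t else m + 1 - t with hν
  have hm0 : ((m : ℕ) : ZMod m) = 0 := ZMod.natCast_self m
  have harg : ∀ t, 1 ≤ t → t ≤ m + 1 → t ≠ d + 1 →
      ν t < m ∧ g t = f (j + 1 + (ν t : ZMod m)) := by
    intro t ht1 htm htd
    rw [hg, hν]
    by_cases hA : t ≤ d
    · simp only [if_neg (by omega : ¬ t = 0), if_pos hA]
      refine ⟨by omega, ?_⟩
      congr 1
      rw [show (m - d - 1 + t : ℕ) = (m - (d + 1)) + t by omega, Nat.cast_add,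
        Nat.cast_sub (by omega : d + 1 ≤ m), hm0]
      push_cast
      rw [hdj]
      ring
    · simp only [if_neg (by omega : ¬ t = 0), if_neg hA, if_neg htd]
      refine ⟨by omega, ?_⟩
      congr 1
      rw [Nat.cast_sub (by omega : d + 2 ≤ t), Nat.cast_sub (by omega : t ≤ m + 1)]
      push_cast
      rw [hdj, hm0]
      ring
  refine no_longer_s16 hC (m + 2) (by omega) (by omega) g ?_ ?_ ?_
  · intro s hs t ht hst
    have hgx : g 0 = x := by simp [hg]
    have hgu : g (d + 1) = u := by
      simp only [hg, if_neg (by omega : ¬ d + 1 = 0), if_neg (by omega : ¬ d + 1 ≤ d)]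
      simp
    by_cases hs0 : s = 0 <;> by_cases ht0 : t = 0 <;>
      by_cases hsd : s = d + 1 <;> by_cases htd : t = d + 1
    all_goals try omega
    · exfalso; subst hs0; subst htd; rw [hgx, hgu] at hst; exact hxu hst
    · exfalso; subst hs0
      obtain ⟨-, hgt⟩ := harg t (by omega) (by omega) htd
      rw [hgx, hgt] at hst; exact hx ⟨_, hst.symm⟩
    · exfalso; subst ht0; subst hsd; rw [hgx, hgu] at hst; exact hxu hst.symm
    · exfalso; subst ht0
      obtain ⟨-, hgs⟩ := harg s (by omega) (by omega) hsd
      rw [hgx, hgs] at hst; exact hx ⟨_, hst⟩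
    · exfalso; subst hsd
      obtain ⟨-, hgt⟩ := harg t (by omega) (by omega) htd
      rw [hgu, hgt] at hst; exact hu ⟨_, hst.symm⟩
    · exfalso; subst htd
      obtain ⟨-, hgs⟩ := harg s (by omega) (by omega) hsd
      rw [hgu, hgs] at hst; exact hu ⟨_, hst⟩
    · obtain ⟨hνs, hgs⟩ := harg s (by omega) (by omega) hsd
      obtain ⟨hνt, hgt⟩ := harg t (by omega) (by omega) htd
      rw [hgs, hgt] at hst
      have hcast : ((ν s : ℕ) : ZMod m) = ν t := add_left_cancel (hfinj hst)
      have hval : ν s = ν t := by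
        have := congrArg ZMod.val hcast
        rwa [ZMod.val_natCast, ZMod.val_natCast, Nat.mod_eq_of_lt hνs,
          Nat.mod_eq_of_lt hνt] at this
      rw [hν] at hval
      simp only at hval
      split_ifs at hval <;> omega
  · intro t ht'
    have htm : t ≤ m := by omega
    simp only [hg]
    by_cases h0 : t = 0
    · subst h0
      simp only [if_pos rfl, if_neg (by omega : ¬ (0 + 1 = 0)),
        if_pos (by omega : 0 + 1 ≤ d)]
      rw [show ((0 + 1 : ℕ) : ZMod m) = 1 by push_cast; ring]
      exact hx1
    · by_cases hA : t + 1 ≤ d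
      · simp only [if_neg h0, if_neg (by omega : ¬ t + 1 = 0),
          if_pos (by omega : t ≤ d), if_pos hA]
        rw [show ((t + 1 : ℕ) : ZMod m) = (t : ZMod m) + 1 by push_cast; ring, ← add_assoc]
        exact hfadj _
      · by_cases hD : t = d
        · subst hD
          simp only [if_neg h0, if_neg (by omega : ¬ d + 1 = 0), if_pos (le_refl d),
            if_neg (by omega : ¬ d + 1 ≤ d), if_pos rfl]
          rw [show i + (d : ZMod m) = j by rw [hdj]; ring]
          exact huj.symm
        · by_cases hD1 : t = d + 1
          · subst hD1
            simp only [if_neg h0, if_neg (by omega : ¬ d + 1 + 1 = 0),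
              if_neg (by omega : ¬ d + 1 ≤ d), if_pos rfl,
              if_neg (by omega : ¬ d + 1 + 1 ≤ d), if_neg (by omega : ¬ d + 1 + 1 = d + 1)]
            rw [show (d + 1 + 1 - (d + 2) : ℕ) = 0 by omega]
            simp only [Nat.cast_zero, sub_zero]
            exact hui
          · simp only [if_neg h0, if_neg (by omega : ¬ t + 1 = 0),
              if_neg (by omega : ¬ t ≤ d), if_neg (by omega : ¬ t + 1 ≤ d),
              if_neg hD1, if_neg (by omega : ¬ t + 1 = d + 1)]
            rw [show ((t + 1 - (d + 2) : ℕ) : ZMod m) = ((t - (d + 2) : ℕ) : ZMod m) + 1 by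
              rw [show t + 1 - (d + 2) = (t - (d + 2)) + 1 by omega]; push_cast; ring]
            have h := (hfadj (i - (((t - (d + 2) : ℕ) : ZMod m) + 1))).symm
            convert h using 2 <;> ring
  · have hg0 : g 0 = x := by simp [hg]
    have hgm : g (m + 2 - 1) = f (j + 1) := by
      simp only [hg, show m + 2 - 1 = m + 1 from rfl]
      rw [if_neg (by omega : ¬ m + 1 = 0), if_neg (by omega : ¬ m + 1 ≤ d),
        if_neg (by omega : ¬ m + 1 = d + 1)]
      congr 1
      rw [show (m + 1 - (d + 2) : ℕ) = m - (d + 1) by omega,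
        Nat.cast_sub (by omega : d + 1 ≤ m), hm0]
      push_cast
      rw [hdj]
      ring
    rw [hg0, hgm]
    exact hx2.symm

lemma succ_heavy_unique {V : Type*} [Fintype V] {G : SimpleGraph V} {m : ℕ} {f : ZMod m → V}
    (hC : IsLongestCycleMap G m f) {u : V} (hu : u ∉ Set.range f) (i j : ZMod m)
    (hui : G.Adj u (f i)) (huj : G.Adj u (f j))
    (hH1 : Heavy G (f (i + 1))) (hH2 : Heavy G (f (j + 1))) : f (i + 1) = f (j + 1) := by
  obtain ⟨hm3, hfinj, hfadj⟩ := hC.1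
  haveI : NeZero m := ⟨by omega⟩
  by_contra hne
  have hij : i ≠ j := fun h => hne (by rw [h])
  set d := (j - i).val with hd'
  have hdm : d < m := ZMod.val_lt _
  have hd0 : d ≠ 0 := by
    rw [hd', Ne, ZMod.val_eq_zero, sub_eq_zero]; exact fun h => hij h.symm
  have hdj : (d : ZMod m) = j - i := zmod_cast_val _
  have hd2 : 2 ≤ d := by
    by_contra h
    have hcast : (d : ZMod m) = 1 := by rw [show d = 1 by omega]; push_cast; ring
    have hj1 : j = i + 1 := by
      rw [hdj] at hcast
      have := sub_eq_iff_eq_add.mp hcast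
      rw [this]; ring
    exact lemU hC hu i hui (hj1 ▸ huj)
  have hdm2 : d ≤ m - 2 := by
    by_contra h
    have hcast : (d : ZMod m) = -1 := by
      rw [show d = m - 1 by omega, Nat.cast_sub (by omega : 1 ≤ m), ZMod.natCast_self]
      push_cast; ring
    have hi1 : i = j + 1 := by
      rw [hdj] at hcast
      have : i - j = 1 := by rw [← neg_sub, hcast]; ring
      have := sub_eq_iff_eq_add.mp this
      rw [this]; ring
    exact lemU hC hu j huj (hi1 ▸ hui)
  have hvalrev : (i - j).val = m - d := by
    have h : ((m - d : ℕ) : ZMod m) = i - j := by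
      rw [Nat.cast_sub (by omega : d ≤ m), ZMod.natCast_self, hdj]; ring
    rw [← h, ZMod.val_natCast, Nat.mod_eq_of_lt (by omega)]
  have hone : (1 : ZMod m).val = 1 := by
    have h : ((1 : ℕ) : ZMod m) = 1 := by push_cast; ring
    rw [← h, ZMod.val_natCast, Nat.mod_eq_of_lt (by omega)]
  have hval_j1 : (j + 1 - j).val = 1 := by rw [show j + 1 - j = 1 by ring, hone]
  have hnadj : ¬ G.Adj (f (i + 1)) (f (j + 1)) := by
    intro hadj
    exact lemX hC hu i j (j + 1) hui huj (by omega) (by rw [hval_j1])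
      (by rw [hval_j1]; omega) hadj (hfadj (j + 1))
  have hnu1 : ¬ G.Adj u (f (i + 1)) := fun h => lemU hC hu i hui h
  have hnu2 : ¬ G.Adj u (f (j + 1)) := fun h => lemU hC hu j huj h
  set A1 : Set (ZMod m) := {k | G.Adj (f (i + 1)) (f k)} with hA1
  set A2 : Set (ZMod m) := {k | G.Adj (f (j + 1)) (f k)} with hA2
  have hmem : ∀ k ∈ A1, (k - i).val ≠ 1 ∧ (k - i).val ≠ d + 1 := by
    intro k hk
    have hko : k = i + (((k - i).val : ℕ) : ZMod m) := by rw [zmod_cast_val]; ring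
    constructor
    · intro h
      rw [h] at hko
      have hk1 : k = i + 1 := by rw [hko]; push_cast; ring
      rw [hA1, Set.mem_setOf_eq, hk1] at hk
      exact hk.ne rfl
    · intro h
      rw [h] at hko
      have hk1 : k = j + 1 := by rw [hko]; push_cast; rw [hdj]; ring
      rw [hA1, Set.mem_setOf_eq, hk1] at hk
      exact hnadj hk
  set νo : ℕ → ℕ := fun o => if o = 0 then d + 1 else if o ≤ d then o - 1 else o + 1 with hνo
  set τ : ZMod m → ZMod m := fun k => i + ((νo (k - i).val : ℕ) : ZMod m) with hτ
  have hτval : ∀ k ∈ A1, 1 ≤ νo (k - i).val ∧ νo (k - i).val ≤ m := by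
    intro k hk
    obtain ⟨h1', h2'⟩ := hmem k hk
    have hom : (k - i).val < m := ZMod.val_lt _
    simp only [hνo]
    split_ifs <;> omega
  have claim1 : Set.InjOn τ A1 := by
    intro k hk k' hk' heq
    obtain ⟨hl, hr⟩ := hτval k hk
    obtain ⟨hl', hr'⟩ := hτval k' hk'
    rw [hτ] at heq
    have hcast : ((νo (k - i).val : ℕ) : ZMod m) = νo (k' - i).val :=
      add_left_cancel heq
    have hνeq : νo (k - i).val = νo (k' - i).val :=
      natCast_zmod_inj hl hr hl' hr' hcast
    obtain ⟨h1', h2'⟩ := hmem k hk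
    obtain ⟨h1'', h2''⟩ := hmem k' hk'
    have hom : (k - i).val < m := ZMod.val_lt _
    have hom' : (k' - i).val < m := ZMod.val_lt _
    have hoeq : (k - i).val = (k' - i).val := by
      rw [hνo] at hνeq
      simp only at hνeq
      split_ifs at hνeq <;> omega
    have hko : k = i + (((k - i).val : ℕ) : ZMod m) := by rw [zmod_cast_val]; ring
    have hko' : k' = i + (((k' - i).val : ℕ) : ZMod m) := by rw [zmod_cast_val]; ring
    rw [hko, hko', hoeq]
  have claim2 : ∀ k ∈ A1, τ k ∉ A2 := by
    intro k hk hk2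
    obtain ⟨h1', h2'⟩ := hmem k hk
    have hom : (k - i).val < m := ZMod.val_lt _
    have hko : k = i + (((k - i).val : ℕ) : ZMod m) := by rw [zmod_cast_val]; ring
    rw [hτ, hνo] at hk2
    simp only at hk2
    by_cases h0 : (k - i).val = 0
    · rw [if_pos h0] at hk2
      have : i + ((d + 1 : ℕ) : ZMod m) = j + 1 := by push_cast; rw [hdj]; ring
      rw [this] at hk2
      exact hk2.ne rfl
    · by_cases hod : (k - i).val ≤ d
      · rw [if_neg h0, if_pos hod] at hk2
        have hkm1 : i + (((k - i).val - 1 : ℕ) : ZMod m) = k - 1 := by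
          rw [Nat.cast_sub (by omega : 1 ≤ (k - i).val), zmod_cast_val]; push_cast; ring
        rw [hkm1] at hk2
        have hk1v : (k - 1 - i).val = (k - i).val - 1 := by
          have h : k - 1 - i = (((k - i).val - 1 : ℕ) : ZMod m) := by
            rw [Nat.cast_sub (by omega : 1 ≤ (k - i).val), zmod_cast_val]; push_cast; ring
          rw [h, ZMod.val_natCast, Nat.mod_eq_of_lt (by omega)]
        refine lemX hC hu j i (k - 1) huj hui ?_ ?_ ?_ hk2 ?_
        · rw [hvalrev]; omega
        · rw [hk1v]; omega
        · rw [hk1v, hvalrev]; omega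
        · rw [sub_add_cancel]; exact hk
      · rw [if_neg h0, if_neg hod] at hk2
        have hkp1 : i + (((k - i).val + 1 : ℕ) : ZMod m) = k + 1 := by
          push_cast; rw [zmod_cast_val]; ring
        rw [hkp1] at hk2
        have hkjv : (k - j).val = (k - i).val - d := by
          have h : k - j = (((k - i).val - d : ℕ) : ZMod m) := by
            rw [Nat.cast_sub (by omega : d ≤ (k - i).val), zmod_cast_val, hdj]; ring
          rw [h, ZMod.val_natCast, Nat.mod_eq_of_lt (by omega)]
        exact lemX hC hu i j k hui huj (by omega) (by rw [hkjv]; omega)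
          (by rw [hkjv]; omega) hk hk2
  have honcycle : A1.ncard + A2.ncard ≤ m := by
    have h1 : A1.ncard = (τ '' A1).ncard := (Set.ncard_image_of_injOn claim1).symm
    have h2 : (τ '' A1).ncard ≤ A2ᶜ.ncard := by
      refine Set.ncard_le_ncard ?_ (Set.toFinite _)
      rintro y ⟨k, hk, rfl⟩
      exact claim2 k hk
    have h3 : A2.ncard + A2ᶜ.ncard = m := by
      rw [Set.ncard_add_ncard_compl, Nat.card_eq_fintype_card, ZMod.card]
    omega
  set B1 : Set V := G.neighborSet (f (i + 1)) \ Set.range f with hB1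
  set B2 : Set V := G.neighborSet (f (j + 1)) \ Set.range f with hB2
  have hsplit1 : (G.neighborSet (f (i + 1))).ncard = A1.ncard + B1.ncard := by
    have h := Set.ncard_inter_add_ncard_diff_eq_ncard (G.neighborSet (f (i + 1)))
      (Set.range f) (Set.toFinite _)
    have himg : G.neighborSet (f (i + 1)) ∩ Set.range f = f '' A1 := by
      ext x
      constructor
      · rintro ⟨hadj, k, rfl⟩; exact ⟨k, hadj, rfl⟩
      · rintro ⟨k, hk, rfl⟩; exact ⟨hk, k, rfl⟩
    rw [himg, Set.ncard_image_of_injective _ hfinj] at h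
    rw [← hB1] at h
    omega
  have hsplit2 : (G.neighborSet (f (j + 1))).ncard = A2.ncard + B2.ncard := by
    have h := Set.ncard_inter_add_ncard_diff_eq_ncard (G.neighborSet (f (j + 1)))
      (Set.range f) (Set.toFinite _)
    have himg : G.neighborSet (f (j + 1)) ∩ Set.range f = f '' A2 := by
      ext x
      constructor
      · rintro ⟨hadj, k, rfl⟩; exact ⟨k, hadj, rfl⟩
      · rintro ⟨k, hk, rfl⟩; exact ⟨hk, k, rfl⟩
    rw [himg, Set.ncard_image_of_injective _ hfinj] at h
    rw [← hB2] at h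
    omega
  have hdisjB : Disjoint B1 B2 := by
    rw [Set.disjoint_left]
    rintro x ⟨hx1, hxr⟩ ⟨hx2, -⟩
    have hxu : x ≠ u := by rintro rfl; exact hnu1 hx1.symm
    exact lemW hC hu hxr hxu i j hui huj (by omega) hx1.symm hx2.symm
  have huB : u ∉ B1 ∪ B2 := by
    rintro (⟨h, -⟩ | ⟨h, -⟩)
    exacts [hnu1 h.symm, hnu2 h.symm]
  have hBsub : B1 ∪ B2 ⊆ (Set.range f)ᶜ \ {u} := by
    intro x hx
    refine ⟨?_, ?_⟩
    · rcases hx with ⟨-, hxr⟩ | ⟨-, hxr⟩ <;> exact hxr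
    · intro hxu
      rw [Set.mem_singleton_iff] at hxu
      exact huB (hxu ▸ hx)
  have hBcard : B1.ncard + B2.ncard ≤ (Set.range f)ᶜ.ncard - 1 := by
    rw [← Set.ncard_union_eq hdisjB (Set.toFinite _) (Set.toFinite _)]
    calc (B1 ∪ B2).ncard ≤ ((Set.range f)ᶜ \ {u}).ncard :=
          Set.ncard_le_ncard hBsub (Set.toFinite _)
      _ = (Set.range f)ᶜ.ncard - 1 := Set.ncard_diff_singleton_of_mem hu
  have hcomplpos : 1 ≤ (Set.range f)ᶜ.ncard :=
    (Set.ncard_pos (Set.toFinite _)).mpr ⟨u, hu⟩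
  have hrange : (Set.range f).ncard = m := by
    rw [← Set.image_univ, Set.ncard_image_of_injective _ hfinj, Set.ncard_univ,
      Nat.card_eq_fintype_card, ZMod.card]
  have hranges : (Set.range f).ncard + (Set.range f)ᶜ.ncard = Fintype.card V := by
    rw [Set.ncard_add_ncard_compl, Nat.card_eq_fintype_card]
  rw [Heavy] at hH1 hH2
  omega

/-- The set of successors (resp. predecessors) on a longest cycle of the
neighbors on the cycle of a vertex `u` outside the cycle contains at most one
heavy vertex. -/
theorem at_most_one_heavy_successor {V : Type*} [Fintype V] [DecidableEq V] (G : SimpleGraph V)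
    (hnh : ¬ G.IsHamiltonian)
    (m : ℕ) (f : ZMod m → V) (hC : IsLongestCycleMap G m f)
    (R : Set V) (hR : IsCompOf G (Set.range f)ᶜ R)
    (u : V) (hu : u ∈ R) :
    (∀ i j : ZMod m, G.Adj u (f i) → G.Adj u (f j) →
      Heavy G (f (i + 1)) → Heavy G (f (j + 1)) → f (i + 1) = f (j + 1)) ∧
    (∀ i j : ZMod m, G.Adj u (f i) → G.Adj u (f j) →
      Heavy G (f (i - 1)) → Heavy G (f (j - 1)) → f (i - 1) = f (j - 1)) := by
  obtain ⟨hm3, hfinj, hfadj⟩ := hC.1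
  have hu' : u ∉ Set.range f := hR.2.1 hu
  constructor
  · intro i j hui huj h1 h2
    exact succ_heavy_unique hC hu' i j hui huj h1 h2
  · intro i j hui huj h1 h2
    set g : ZMod m → V := fun k => f (-k) with hg
    have hCg : IsLongestCycleMap G m g := by
      refine ⟨⟨hm3, ?_, ?_⟩, hC.2⟩
      · intro a b hab
        exact neg_injective (hfinj hab)
      · intro k
        have h := (hfadj (-k - 1)).symm
        rw [show -k - 1 + 1 = -k by ring] at h
        show G.Adj (f (-k)) (f (-(k + 1)))
        rw [show -(k + 1) = -k - 1 by ring]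
        exact h
    have hug : u ∉ Set.range g := by
      rintro ⟨k, hk⟩
      exact hu' ⟨-k, hk⟩
    have e1 : ∀ a : ZMod m, g (-a + 1) = f (a - 1) := by
      intro a
      show f (-(-a + 1)) = f (a - 1)
      rw [show -(-a + 1) = a - 1 by ring]
    have hgi : G.Adj u (g (-i)) := by
      show G.Adj u (f (-(-i)))
      rw [neg_neg]; exact hui
    have hgj : G.Adj u (g (-j)) := by
      show G.Adj u (f (-(-j)))
      rw [neg_neg]; exact huj
    have := succ_heavy_unique hCg hug (-i) (-j) hgi hgj
      (by rw [e1 i]; exact h1) (by rw [e1 j]; exact h2)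
    rw [e1 i, e1 j] at this
    exact this
end

section
/- For every even integer n ≥ 10, there exists a graph G on n vertices that is 2-connected, claw-heavy, almost distance-hereditary, and Hamiltonian, but is not 2-heavy. Concretely: let K_{n/2} + K_{n/2−3} be the join of complete graphs on n/2 and n/2−3 vertices, fix y in the K_{n/2} part, and add three new vertices v, u, x with edges uv, uy, ux and all edges from v and from x to every vertex of the K_{n/2−3} part; this graph G satisfies the hypotheses of the claw-heavy Hamiltonicity theorem but not the 2-heavy one. -/
open SimpleGraph

/-!
The witness is a split graph on `Fin n`: the vertices other than `1` and `3` form a clique, and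
`1`, `3` are both joined to exactly `0`, `2`, `4`. The ends of a claw are pairwise nonadjacent, so
they are `1`, `3` and a clique vertex `w` not adjacent to them, i.e. outside `{0, 2, 4}`; thus
`deg 1 + deg w = 3 + (n - 3) = n`, while `1` and `3` have degree `3 < n / 2`. In a split graph a
connected induced subgraph has diameter at most `3` (walk from each end into the clique and cross
it in one step), while nonadjacent vertices are at distance at least `2`. The order
`0, 1, …, n - 1` is a Hamiltonian cycle, and `0` and `2` are adjacent to every other vertex, so
deleting one vertex leaves the graph connected.

The graph given in the paper is not claw-heavy for `n = 10`: a vertex of its `K_{n/2-3}` part is the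
centre of a claw with ends `v`, `x` and a vertex of `K_{n/2}` other than `y`, of degrees `3, 3, 6`.
-/
namespace SimpleGraph

variable {V : Type*} {G : SimpleGraph V}

theorem connected_of_forall_adj (c : V) (h : ∀ v, v ≠ c → G.Adj v c) : G.Connected := by
  have hc : ∀ v, G.Reachable v c := by
    intro v
    by_cases hv : v = c
    · exact hv ▸ Reachable.refl v
    · exact (h v hv).reachable
  exact (connected_iff G).mpr ⟨fun u v => (hc u).trans (hc v).symm, ⟨c⟩⟩

theorem Preconnected.exists_adj (hG : G.Preconnected) {u v : V} (huv : u ≠ v) :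
    ∃ w, G.Adj u w := by
  obtain ⟨p⟩ := hG u v
  exact ⟨p.snd, p.adj_snd (Walk.not_nil_of_ne huv)⟩

theorem almostDH_of_isClique_of_isIndepSet_compl {K : Set V} (hK : G.IsClique K)
    (hI : G.IsIndepSet Kᶜ) : AlmostDH G := by
  intro s hs x y
  set H := G.induce s
  have near_clique : ∀ a b : s, a ≠ b → ∃ k : s, (k : V) ∈ K ∧ H.dist a k ≤ 1 := by
    intro a b hab
    by_cases ha : (a : V) ∈ K
    · exact ⟨a, ha, by simp⟩
    obtain ⟨k, hak⟩ := hs.preconnected.exists_adj hab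
    have hk : (k : V) ∈ K := by
      by_contra hk
      exact hI ha hk (fun h => hak.ne (Subtype.ext h)) hak
    exact ⟨k, hk, (dist_eq_one_iff_adj.mpr hak).le⟩
  rcases eq_or_ne x y with rfl | hxy
  · simp
  by_cases hadj : G.Adj x y
  · have : H.dist x y = 1 := dist_eq_one_iff_adj.mpr hadj
    omega
  obtain ⟨k, hk, hxk⟩ := near_clique x y hxy
  obtain ⟨l, hl, hyl⟩ := near_clique y x hxy.symm
  have hkl : H.dist k l ≤ 1 := by
    rcases eq_or_ne k l with rfl | hne
    · simp
    exact (dist_eq_one_iff_adj (G := H).mpr (hK hk hl fun h => hne (Subtype.ext h))).le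
  have hH : H.dist x y ≤ 3 :=
    calc H.dist x y ≤ H.dist x k + (H.dist k l + H.dist l y) := by
          grw [← hs.dist_triangle, ← hs.dist_triangle]
      _ ≤ 3 := by rw [dist_comm (u := l)]; omega
  have hG : 1 < G.dist x y :=
    ((hs x y).map (Embedding.induce s).toHom).one_lt_dist_of_ne_of_not_adj
      (fun h => hxy (Subtype.ext h)) hadj
  omega

theorem cycleGraph_isHamiltonian {n : ℕ} (hn : 3 ≤ n) : (cycleGraph n).IsHamiltonian := by
  obtain ⟨m, rfl⟩ : ∃ m, n = m + 3 := ⟨n - 3, by omega⟩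
  intro _
  exact ⟨0, cycleGraph.cycle m, Walk.isHamiltonianCycle_iff_isCycle_and_length_eq.mpr
    ⟨cycleGraph.isCycle_cycle, by simp [cycleGraph.length_cycle]⟩⟩

theorem cycleGraph_le_of_adj {n : ℕ} {G : SimpleGraph (Fin n)}
    (h : ∀ u v : Fin n, (u : ℕ) + 1 = v ∨ ((u : ℕ) + 1 = n ∧ (v : ℕ) = 0) → G.Adj u v) :
    cycleGraph n ≤ G := by
  intro u v huv
  rw [cycleGraph_adj'] at huv
  have key : ∀ a b : Fin n, ((a - b : Fin n) : ℕ) = 1 → G.Adj a b := by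
    intro a b hab
    refine (h b a ?_).symm
    rcases le_or_gt b a with hba | hab'
    · rw [Fin.coe_sub_iff_le.mpr hba] at hab
      omega
    · rw [Fin.coe_sub_iff_lt.mpr hab'] at hab
      omega
  exact huv.elim (key u v) (fun h => (key v u h).symm)

end SimpleGraph

namespace ClawHeavyExample

def IsLight (i : ℕ) : Prop := i = 1 ∨ i = 3

def IsHub (i : ℕ) : Prop := i = 0 ∨ i = 2 ∨ i = 4

def graph (n : ℕ) : SimpleGraph (Fin n) :=
  fromRel fun x y => (¬IsLight x ∧ ¬IsLight y) ∨ (IsLight x ∧ IsHub y)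

variable {n : ℕ}

theorem graph_adj {x y : Fin n} : (graph n).Adj x y ↔ (x : ℕ) ≠ y ∧
    ((¬IsLight x ∧ ¬IsLight y) ∨ (IsLight x ∧ IsHub y) ∨ (IsLight y ∧ IsHub x)) := by
  rw [graph, fromRel_adj, Fin.val_ne_iff]
  tauto

theorem adj_of_isHub {u v : Fin n} (hv : IsHub v) (huv : u ≠ v) : (graph n).Adj u v := by
  rw [ne_eq, Fin.ext_iff] at huv
  simp only [graph_adj, IsLight, IsHub] at *
  omega

theorem isClique_setOf_not_isLight : (graph n).IsClique {x | ¬IsLight x} := by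
  intro x hx y hy hxy
  rw [graph_adj]
  exact ⟨Fin.val_ne_iff.mpr hxy, Or.inl ⟨hx, hy⟩⟩

theorem isIndepSet_compl_setOf_not_isLight : (graph n).IsIndepSet {x | ¬IsLight x}ᶜ := by
  intro x hx y hy _
  simp only [Set.mem_compl_iff, Set.mem_ofPred_eq, not_not] at hx hy
  simp only [graph_adj, IsLight, IsHub] at *
  omega

theorem almostDH : AlmostDH (graph n) :=
  almostDH_of_isClique_of_isIndepSet_compl isClique_setOf_not_isLight
    isIndepSet_compl_setOf_not_isLight

theorem connected_induce_compl_singleton (hn : 3 ≤ n) (v : Fin n) :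
    ((graph n).induce {v}ᶜ).Connected := by
  obtain ⟨c, hcv, hc⟩ : ∃ c : Fin n, c ≠ v ∧ IsHub c := by
    by_cases hv : (v : ℕ) = 0
    · exact ⟨⟨2, by omega⟩, by simp [Fin.ext_iff, hv], by simp [IsHub]⟩
    · exact ⟨⟨0, by omega⟩, by simp [Fin.ext_iff, Ne.symm hv], by simp [IsHub]⟩
  exact connected_of_forall_adj ⟨c, hcv⟩ fun u hu =>
    adj_of_isHub hc fun h => hu (Subtype.ext h)

theorem isHamiltonian (hn : 3 ≤ n) : (graph n).IsHamiltonian := by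
  refine (cycleGraph_isHamiltonian hn).mono (cycleGraph_le_of_adj fun u v huv => ?_)
  rw [graph_adj]
  simp only [IsLight, IsHub]
  omega

theorem ncard_neighborSet_of_isLight (hn : 5 ≤ n) {v : Fin n} (hv : IsLight v) :
    ((graph n).neighborSet v).ncard = 3 := by
  have hN : (graph n).neighborSet v = {⟨0, by omega⟩, ⟨2, by omega⟩, ⟨4, by omega⟩} := by
    ext y
    simp only [mem_neighborSet, graph_adj, Set.mem_insert_iff, Set.mem_singleton_iff,
      Fin.ext_iff, IsLight, IsHub] at *
    omega
  exact Set.ncard_eq_three.mpr ⟨_, _, _, by simp, by simp, by simp, hN⟩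

theorem ncard_neighborSet_of_not_isHub {v : Fin n} (hv : ¬IsLight v) (hv' : ¬IsHub v) :
    ((graph n).neighborSet v).ncard = n - 3 := by
  have h1 : 1 < n := by simp only [IsLight, IsHub] at *; omega
  have h3 : 3 < n := by simp only [IsLight, IsHub] at *; omega
  have hN : (graph n).neighborSet v = {v, ⟨1, h1⟩, ⟨3, h3⟩}ᶜ := by
    ext y
    simp only [mem_neighborSet, graph_adj, Set.mem_compl_iff, Set.mem_insert_iff,
      Set.mem_singleton_iff, Fin.ext_iff, IsLight, IsHub] at *
    omega
  have h3 : ({v, ⟨1, h1⟩, ⟨3, h3⟩} : Set (Fin n)).ncard = 3 := by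
    refine Set.ncard_eq_three.mpr ⟨_, _, _, ?_, ?_, by simp, rfl⟩ <;>
      simp only [IsLight, ne_eq, Fin.ext_iff] at * <;> omega
  rw [hN, Set.ncard_compl, Nat.card_fin, h3]

theorem le_ncard_neighborSet_add (hn : 5 ≤ n) {x y : Fin n} (hx : IsLight x) (hy : ¬IsLight y)
    (hxy : ¬(graph n).Adj x y) :
    n ≤ ((graph n).neighborSet x).ncard + ((graph n).neighborSet y).ncard := by
  have hy' : ¬IsHub y := fun h => hxy (adj_of_isHub h (by rintro rfl; exact hy hx))
  rw [ncard_neighborSet_of_isLight hn hx, ncard_neighborSet_of_not_isHub hy hy']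
  omega

theorem adj_of_not_isLight {x y : Fin n} (hx : ¬IsLight x) (hy : ¬IsLight y) (hxy : x ≠ y) :
    (graph n).Adj x y :=
  isClique_setOf_not_isLight hx hy hxy

theorem clawHeavy (hn : 5 ≤ n) : ClawHeavy (graph n) := by
  rintro a b c d ⟨-, -, -, nbc, nbd, ncd, hbc, hbd, hcd⟩
  rw [Fintype.card_fin]
  by_cases hd : IsLight d
  · by_cases hc : IsLight c
    · have hb : ¬IsLight b := by
        simp only [IsLight, ne_eq, Fin.ext_iff] at *
        omega
      left
      rw [add_comm]
      exact le_ncard_neighborSet_add hn hc hb fun h => nbc h.symm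
    · right; right
      rw [add_comm]
      exact le_ncard_neighborSet_add hn hd hc fun h => ncd h.symm
  · have hb : IsLight b := by_contra fun hb => nbd (adj_of_not_isLight hb hd hbd)
    exact Or.inr (Or.inl (le_ncard_neighborSet_add hn hb hd nbd))

theorem not_heavy_of_isLight (hn : 7 ≤ n) {v : Fin n} (hv : IsLight v) : ¬Heavy (graph n) v := by
  rw [Heavy, Fintype.card_fin, ncard_neighborSet_of_isLight (by omega) hv]
  omega

theorem not_twoHeavy (hn : 7 ≤ n) : ¬TwoHeavy (graph n) := by
  have hclaw : IsClaw (graph n) ⟨0, by omega⟩ ⟨1, by omega⟩ ⟨3, by omega⟩ ⟨5, by omega⟩ := by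
    simp [IsClaw, graph_adj, IsLight, IsHub]
  have h1 := not_heavy_of_isLight hn (v := ⟨1, by omega⟩) (Or.inl rfl)
  have h3 := not_heavy_of_isLight hn (v := ⟨3, by omega⟩) (Or.inr rfl)
  intro h
  rcases h _ _ _ _ hclaw with ⟨h, -⟩ | ⟨h, -⟩ | ⟨h, -⟩ <;> tauto

end ClawHeavyExample

theorem exists_clawHeavy_not_twoHeavy_general (n : ℕ) (hn : 10 ≤ n) :
    ∃ (V : Type) (_ : Fintype V) (_ : DecidableEq V) (G : SimpleGraph V),
      Fintype.card V = n ∧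
      (∀ v : V, (G.induce {v}ᶜ).Connected) ∧
      ClawHeavy G ∧ AlmostDH G ∧ G.IsHamiltonian ∧ ¬ TwoHeavy G :=
  ⟨Fin n, inferInstance, inferInstance, ClawHeavyExample.graph n, Fintype.card_fin n,
    ClawHeavyExample.connected_induce_compl_singleton (by omega),
    ClawHeavyExample.clawHeavy (by omega), ClawHeavyExample.almostDH,
    ClawHeavyExample.isHamiltonian (by omega), ClawHeavyExample.not_twoHeavy (by omega)⟩

/-- For every even `n ≥ 10` there is an `n`-vertex graph which is 2-connected,
claw-heavy, almost distance-hereditary and Hamiltonian, yet not 2-heavy. -/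
theorem exists_clawHeavy_not_twoHeavy (n : ℕ) (hn : 10 ≤ n) (he : Even n) :
    ∃ (V : Type) (_ : Fintype V) (_ : DecidableEq V) (G : SimpleGraph V),
      Fintype.card V = n ∧
      (∀ v : V, (G.induce {v}ᶜ).Connected) ∧
      ClawHeavy G ∧ AlmostDH G ∧ G.IsHamiltonian ∧ ¬ TwoHeavy G :=
  exists_clawHeavy_not_twoHeavy_general n hn
end
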